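/- arXiv:1603.01039 — 6 statements merged into one kernel-verified Lean document; each statement's English description precedes it below -/
import Mathlib

section
/- Let r ≥ 3, n ∈ ℕ, 0 ≤ δ ≤ 1/(2r), and let G be an r-partite graph on (V_1,...,V_r) with |V_1| = ... = |V_r| = n and every vertex having at least (1−δ)n neighbours in each other part. Then for each subset I ⊆ [r] and each i ∈ I, writing k_I for the number of cliques of G with exactly one vertex in V_j for each j ∈ I, we have k_I/n ≤ k_{I∖{i}} ≤ (1+2δr)·k_I/n. -/
open Finset
open scoped Classical

/-- The set of cliques of `G` having exactly one vertex in part `V_i` for each `i ∈ I`. -/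
noncomputable def partCliques {V : Type*} [Fintype V] [DecidableEq V] {r : ℕ}
    (G : SimpleGraph V) (P : V → Fin r) (I : Finset (Fin r)) : Finset (Finset V) :=
  Finset.univ.filter fun S => G.IsClique (S : Set V) ∧ S.image P = I ∧ S.card = I.card

/-- k_I/n ≤ k_{I∖{i}} ≤ (1+2δr)·k_I/n. -/
theorem stmt_1 {V : Type*} [Fintype V] [DecidableEq V] {r n : ℕ} (hr : 3 ≤ r) (hn : 0 < n)
    (δ : ℝ) (hδ0 : 0 ≤ δ) (hδ1 : δ ≤ 1 / (2 * r))
    (G : SimpleGraph V) (P : V → Fin r)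
    (hpart : ∀ u v, G.Adj u v → P u ≠ P v)
    (hsize : ∀ i : Fin r, (Finset.univ.filter fun v => P v = i).card = n)
    (hdeg : ∀ (j : Fin r) (v : V), P v ≠ j →
      (1 - δ) * n ≤ ((Finset.univ.filter fun u => P u = j ∧ G.Adj v u).card : ℝ)) :
    ∀ (I : Finset (Fin r)), ∀ i ∈ I,
      ((partCliques G P I).card : ℝ) / n ≤ ((partCliques G P (I.erase i)).card : ℝ) ∧
        ((partCliques G P (I.erase i)).card : ℝ) ≤
          (1 + 2 * δ * r) * ((partCliques G P I).card : ℝ) / n := by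
  intro I i hi
  set J := I.erase i with hJdef
  have hiJ : i ∉ J := notMem_erase i I
  set ext : Finset V → Finset V :=
    fun T => univ.filter fun v => P v = i ∧ ∀ t ∈ T, G.Adj v t with hextdef
  -- basic facts about members of partCliques G P J
  have hmemJ : ∀ T ∈ partCliques G P J,
      G.IsClique (T : Set V) ∧ T.image P = J ∧ T.card = J.card := by
    intro T hT
    simpa [partCliques] using hT
  -- v ∉ T for v ∈ ext T
  have hvnotT : ∀ T : Finset V, T.image P = J → ∀ v ∈ ext T, v ∉ T := by
    intro T himg v hv hvT
    simp only [hextdef, mem_filter, mem_univ, true_and] at hv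
    have h1 : i ∈ T.image P := by
      rw [← hv.1]; exact mem_image_of_mem P hvT
    rw [himg] at h1
    exact hiJ h1
  -- decomposition
  have hdecomp : partCliques G P I =
      (partCliques G P J).biUnion fun T => (ext T).image fun v => insert v T := by
    ext S
    simp only [partCliques, mem_filter, mem_univ, true_and, mem_biUnion, mem_image]
    constructor
    · rintro ⟨hclique, himg, hcard⟩
      have hiI : i ∈ S.image P := himg ▸ hi
      obtain ⟨v, hvS, hPv⟩ := mem_image.mp hiI
      have hinj : Set.InjOn P (S : Set V) := by
        rw [← Finset.card_image_iff, himg, hcard]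
      have hTclique : G.IsClique ((S.erase v : Finset V) : Set V) :=
        hclique.subset (by intro x hx; exact mem_of_mem_erase (by exact_mod_cast hx))
      have hTimg : (S.erase v).image P = J := by
        ext j
        simp only [mem_image, hJdef, mem_erase]
        constructor
        · rintro ⟨t, ht, rfl⟩
          obtain ⟨htv, htS⟩ := ht
          refine ⟨fun hPt => htv (hinj htS hvS (hPt.trans hPv.symm)), ?_⟩
          exact himg ▸ mem_image_of_mem P htS
        · rintro ⟨hji, hjI⟩
          obtain ⟨t, htS, rfl⟩ := mem_image.mp (himg ▸ hjI : j ∈ S.image P)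
          exact ⟨t, ⟨fun h => hji (by rw [h]; exact hPv), htS⟩, rfl⟩
      have hTcard : (S.erase v).card = J.card := by
        rw [card_erase_of_mem hvS, hcard, hJdef, card_erase_of_mem hi]
      refine ⟨S.erase v, ⟨hTclique, hTimg, hTcard⟩, v, ?_, insert_erase hvS⟩
      simp only [hextdef, mem_filter, mem_univ, true_and]
      refine ⟨hPv, fun t ht => ?_⟩
      obtain ⟨htv, htS⟩ := mem_erase.mp ht
      exact hclique hvS htS (fun h => htv h.symm)
    · rintro ⟨T, hT, v, hv, rfl⟩
      obtain ⟨hTclique, hTimg, hTcard⟩ := hT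
      have hvT : v ∉ T := hvnotT T hTimg v hv
      simp only [hextdef, mem_filter, mem_univ, true_and] at hv
      refine ⟨?_, ?_, ?_⟩
      · rw [coe_insert]
        exact hTclique.insert fun b hb _ => hv.2 b hb
      · rw [image_insert, hTimg, hv.1, hJdef, insert_erase hi]
      · rw [card_insert_of_notMem hvT, hTcard, hJdef, card_erase_of_mem hi,
          Nat.sub_add_cancel (Finset.card_pos.mpr ⟨i, hi⟩)]
  -- disjointness of the fibers
  have hdisj : ∀ T₁ ∈ partCliques G P J, ∀ T₂ ∈ partCliques G P J, T₁ ≠ T₂ →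
      Disjoint ((ext T₁).image fun v => insert v T₁) ((ext T₂).image fun v => insert v T₂) := by
    intro T₁ hT₁ T₂ hT₂ hne
    rw [disjoint_left]
    rintro S hS₁ hS₂
    obtain ⟨v₁, hv₁, rfl⟩ := mem_image.mp hS₁
    obtain ⟨v₂, hv₂, hEq⟩ := mem_image.mp hS₂
    obtain ⟨_, himg₁, _⟩ := hmemJ T₁ hT₁
    obtain ⟨_, himg₂, _⟩ := hmemJ T₂ hT₂
    have hv₁n : v₁ ∉ T₁ := hvnotT T₁ himg₁ v₁ hv₁
    have hv₂n : v₂ ∉ T₂ := hvnotT T₂ himg₂ v₂ hv₂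
    have hEq' : insert v₂ T₂ = insert v₁ T₁ := hEq
    simp only [hextdef, mem_filter, mem_univ, true_and] at hv₁ hv₂
    have hv12 : v₁ = v₂ := by
      have hmm : v₁ ∈ insert v₂ T₂ := by rw [hEq']; exact mem_insert_self v₁ T₁
      rcases mem_insert.mp hmm with h | h
      · exact h
      · exfalso
        have h1 : i ∈ T₂.image P := by rw [← hv₁.1]; exact mem_image_of_mem P h
        rw [himg₂] at h1
        exact hiJ h1
    apply hne
    have h2 : (insert v₁ T₁).erase v₁ = (insert v₂ T₂).erase v₂ := by rw [← hEq', hv12]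
    rwa [erase_insert hv₁n, erase_insert hv₂n] at h2
  have hcard_eq : (partCliques G P I).card = ∑ T ∈ partCliques G P J, (ext T).card := by
    rw [hdecomp, card_biUnion hdisj]
    refine sum_congr rfl fun T hT => ?_
    apply card_image_of_injOn
    obtain ⟨_, himgT, _⟩ := hmemJ T hT
    intro v₁ hv₁ v₂ hv₂ hEq
    have hv₁n : v₁ ∉ T := hvnotT T himgT v₁ hv₁
    have hEq' : insert v₁ T = insert v₂ T := hEq
    have hmm : v₁ ∈ insert v₂ T := by rw [← hEq']; exact mem_insert_self v₁ T
    rcases mem_insert.mp hmm with h | h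
    · exact h
    · exact absurd h hv₁n
  -- upper bound on fibers
  have hub : ∀ T, (ext T).card ≤ n := by
    intro T
    calc (ext T).card ≤ (univ.filter fun v => P v = i).card := by
          apply card_le_card
          intro v hv
          simp only [hextdef, mem_filter, mem_univ, true_and] at hv ⊢
          exact hv.1
      _ = n := hsize i
  -- lower bound on fibers
  have hlb : ∀ T ∈ partCliques G P J, (1 - δ * r) * n ≤ ((ext T).card : ℝ) := by
    intro T hT
    obtain ⟨_, himg, hTcard⟩ := hmemJ T hT
    set Vi : Finset V := univ.filter fun v => P v = i with hVi
    have hsub : ext T ⊆ Vi := by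
      intro v hv
      simp only [hextdef, hVi, mem_filter, mem_univ, true_and] at hv ⊢
      exact hv.1
    have hbad : Vi \ ext T ⊆ T.biUnion fun t => Vi.filter fun u => ¬ G.Adj t u := by
      intro v hv
      obtain ⟨hvVi, hvext⟩ := mem_sdiff.mp hv
      simp only [hVi, mem_filter, mem_univ, true_and] at hvVi
      simp only [hextdef, mem_filter, mem_univ, true_and, hvVi, true_and, not_forall] at hvext
      obtain ⟨t, ht, hadj⟩ := hvext
      refine mem_biUnion.mpr ⟨t, ht, mem_filter.mpr ⟨by simp [hVi, hvVi], fun h => hadj h.symm⟩⟩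
    have hbadcard : ∀ t ∈ T, ((Vi.filter fun u => ¬ G.Adj t u).card : ℝ) ≤ δ * n := by
      intro t ht
      have hPt : P t ≠ i := by
        intro h
        have h1 : i ∈ T.image P := by rw [← h]; exact mem_image_of_mem P ht
        rw [himg] at h1
        exact hiJ h1
      have hdegt := hdeg i t hPt
      have hfe : Vi.filter (fun u => G.Adj t u) = univ.filter fun u => P u = i ∧ G.Adj t u := by
        rw [hVi, filter_filter]
      have hsplit : (Vi.filter fun u => G.Adj t u).card
          + (Vi.filter fun u => ¬ G.Adj t u).card = n := by
        rw [card_filter_add_card_filter_not, hVi, hsize i]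
      have : ((Vi.filter fun u => G.Adj t u).card : ℝ)
          + ((Vi.filter fun u => ¬ G.Adj t u).card : ℝ) = n := by exact_mod_cast hsplit
      rw [hfe] at this
      nlinarith [hdegt]
    have hTr : (T.card : ℝ) ≤ r := by
      have : T.card ≤ Fintype.card (Fin r) := by
        rw [hTcard]; exact card_le_univ J
      simpa using this
    have hsd : ((Vi \ ext T).card : ℝ) ≤ δ * r * n := by
      calc ((Vi \ ext T).card : ℝ) ≤ ((T.biUnion fun t => Vi.filter fun u => ¬ G.Adj t u).card : ℝ) := by
            exact_mod_cast card_le_card hbad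
        _ ≤ (∑ t ∈ T, (Vi.filter fun u => ¬ G.Adj t u).card : ℕ) := by
            exact_mod_cast card_biUnion_le
        _ = ∑ t ∈ T, ((Vi.filter fun u => ¬ G.Adj t u).card : ℝ) := by push_cast; ring
        _ ≤ ∑ t ∈ T, δ * n := sum_le_sum hbadcard
        _ = (T.card : ℝ) * (δ * n) := by rw [sum_const, nsmul_eq_mul]
        _ ≤ r * (δ * n) := by
            apply mul_le_mul_of_nonneg_right hTr (by positivity)
        _ = δ * r * n := by ring
    have hVict : ((Vi \ ext T).card : ℝ) + ((ext T).card : ℝ) = n := by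
      have := card_sdiff_add_card_eq_card hsub
      rw [hVi] at this ⊢
      rw [hsize i] at this
      exact_mod_cast this
    nlinarith
  -- combine
  have hnR : (0 : ℝ) < n := by exact_mod_cast hn
  set kI : ℝ := ((partCliques G P I).card : ℝ)
  set kJ : ℝ := ((partCliques G P J).card : ℝ)
  have hkJ0 : 0 ≤ kJ := by positivity
  have hsum : kI = ∑ T ∈ partCliques G P J, ((ext T).card : ℝ) := by
    rw [show kI = ((partCliques G P I).card : ℝ) from rfl, hcard_eq]; push_cast; ring
  have hA : kI ≤ kJ * n := by
    rw [hsum]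
    calc ∑ T ∈ partCliques G P J, ((ext T).card : ℝ)
        ≤ ∑ T ∈ partCliques G P J, (n : ℝ) := sum_le_sum fun T _ => by exact_mod_cast hub T
      _ = kJ * n := by rw [sum_const, nsmul_eq_mul]
  have hB : kJ * ((1 - δ * r) * n) ≤ kI := by
    rw [hsum]
    calc kJ * ((1 - δ * r) * n) = ∑ _T ∈ partCliques G P J, (1 - δ * r) * n := by
          rw [sum_const, nsmul_eq_mul]
      _ ≤ ∑ T ∈ partCliques G P J, ((ext T).card : ℝ) := sum_le_sum hlb
  have hx1 : δ * r ≤ 1 / 2 := by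
    have hr0 : (0 : ℝ) < r := by positivity
    have := mul_le_mul_of_nonneg_right hδ1 (le_of_lt hr0)
    calc δ * r ≤ 1 / (2 * r) * r := this
      _ = 1 / 2 := by field_simp
  have hx0 : 0 ≤ δ * r := by positivity
  constructor
  · rw [div_le_iff₀ hnR]
    exact hA
  · rw [le_div_iff₀ hnR]
    have hkI0 : 0 ≤ kI := by positivity
    nlinarith [mul_nonneg hkJ0 (le_of_lt hnR)]
end

section
/- Let r ≥ 3, n ∈ ℕ, 0 ≤ δ ≤ 1/(8r), and let G be an r-partite graph on (V_1,...,V_r) with |V_1| = ... = |V_r| = n and minimum cross-degree at least (1−δ)n. For each edge e of G, let z_e be the number of copies of K_r in G containing e. Then for every edge e, |z_e − k/n²| ≤ 9δr·k/n², where k is the total number of copies of K_r in G with one vertex in each part. -/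
open Finset
open scoped Classical

/-!
Replacing the vertex of a clique that lies in part `j` by another common neighbour of the
remaining vertices in part `j` gives again a clique, and by the degree condition a clique `F`
avoiding part `j` has at least `n - |F| δ n` and at most `n` such extensions. Counting the
`K_r` through a vertex `w`, or through an edge `uv`, by the cliques of their link, one
extension step per part gives `z_w (1 - rδ) n ≤ k` and `z_{uv} (1 - 2rδ) n² ≤ k`. Conversely,
every `K_r` whose vertices outside the parts of `u` and `v` are all adjacent to `u` and `v`
arises from the link of `uv` by two extension steps, so there are at most `z_{uv} n²` of them;
every other `K_r` contains one of the at most `2rδn` non-neighbours of `u` or `v`, each of which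
lies in at most `8k / (7n)` copies by the vertex bound.
-/

theorem Finset.filter_ne_insert_of_eq {α β : Type*} [DecidableEq α] [DecidableEq β] {f : α → β}
    {b : β} {a : α} {s : Finset α} (ha : f a = b) (hs : ∀ x ∈ s, f x ≠ b) :
    (insert a s).filter (f · ≠ b) = s := by
  rw [filter_insert, if_neg (not_not.mpr ha), filter_true_of_mem hs]

namespace SimpleGraph

variable {V : Type*} [Fintype V] {G : SimpleGraph V} {r m n : ℕ} {P : V → Fin r} {δ : ℝ}

variable (G) in
noncomputable def commonNbrsIn (P : V → Fin r) (j : Fin r) (F : Finset V) : Finset V :=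
  univ.filter fun x => P x = j ∧ ∀ z ∈ F, G.Adj z x

def PartsOfSize (P : V → Fin r) (n : ℕ) : Prop :=
  ∀ i, #(univ.filter fun v => P v = i) = n

variable (G) in
def MinCrossDegree (P : V → Fin r) (δ : ℝ) (n : ℕ) : Prop :=
  ∀ (j : Fin r) (v : V), P v ≠ j → (1 - δ) * n ≤ (#(univ.filter fun u => P u = j ∧ G.Adj v u) : ℝ)

theorem card_nonAdj_le (hsize : PartsOfSize P n) (hdeg : G.MinCrossDegree P δ n) {v : V}
    {j : Fin r} (hv : P v ≠ j) : (#(univ.filter fun x => P x = j ∧ ¬G.Adj v x) : ℝ) ≤ δ * n := by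
  have hsplit := card_filter_add_card_filter_not (s := univ.filter (P · = j)) (G.Adj v)
  rw [filter_filter, filter_filter, hsize j] at hsplit
  have hsplit' : (#(univ.filter fun x => P x = j ∧ G.Adj v x) : ℝ)
      + #(univ.filter fun x => P x = j ∧ ¬G.Adj v x) = n := by exact_mod_cast hsplit
  linarith [hdeg j v hv]

variable (G) in
noncomputable def crossNonNbrs (P : V → Fin r) (v : V) : Finset V :=
  univ.filter fun x => P x ≠ P v ∧ ¬G.Adj v x

theorem card_crossNonNbrs_le (hsize : PartsOfSize P n) (hdeg : G.MinCrossDegree P δ n) (v : V) :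
    (#(G.crossNonNbrs P v) : ℝ) ≤ (r - 1) * (δ * n) := by
  rw [card_eq_sum_card_fiberwise (f := P) (t := univ.erase (P v))
    fun x hx => mem_erase.mpr ⟨(mem_filter.mp hx).2.1, mem_univ _⟩]
  push_cast
  refine (sum_le_card_nsmul _ _ (δ * n) fun j hj => ?_).trans_eq ?_
  · refine le_trans ?_ (card_nonAdj_le hsize hdeg (Ne.symm (ne_of_mem_erase hj)))
    exact_mod_cast card_le_card fun x => by simp +contextual [crossNonNbrs]
  · rw [card_erase_of_mem (mem_univ _), card_univ, Fintype.card_fin, nsmul_eq_mul,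
      Nat.cast_pred (Fin.pos (P v))]

theorem card_commonNbrsIn_ge (hsize : PartsOfSize P n) (hdeg : G.MinCrossDegree P δ n)
    {j : Fin r} {F : Finset V} (hF : ∀ z ∈ F, P z ≠ j) :
    (n : ℝ) - #F * (δ * n) ≤ #(G.commonNbrsIn P j F) := by
  have hcover : univ.filter (P · = j) ⊆ G.commonNbrsIn P j F ∪
      F.biUnion fun z => univ.filter fun x => P x = j ∧ ¬G.Adj z x := by
    intro x hx
    by_cases h : ∀ z ∈ F, G.Adj z x
    · exact mem_union_left _ (by simp_all [commonNbrsIn])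
    · push Not at h
      obtain ⟨z, hz, hzx⟩ := h
      exact mem_union_right _ (mem_biUnion.mpr ⟨z, hz, by simp_all⟩)
  have hcard : (n : ℝ) ≤ #(G.commonNbrsIn P j F) +
      ∑ z ∈ F, (#(univ.filter fun x => P x = j ∧ ¬G.Adj z x) : ℝ) := by
    rw [← hsize j]
    exact_mod_cast (card_le_card hcover).trans
      ((card_union_le _ _).trans (Nat.add_le_add_left card_biUnion_le _))
  have hsum := sum_le_card_nsmul F _ _ fun z hz => card_nonAdj_le hsize hdeg (hF z hz)
  rw [nsmul_eq_mul] at hsum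
  linarith

variable [DecidableEq V]

variable (G) in
noncomputable def cliqueLink (m : ℕ) (T : Finset V) : Finset (Finset V) :=
  (G.cliqueFinset m).filter fun F => ∀ z ∈ F, ∀ t ∈ T, G.Adj t z

theorem card_cliqueFinset_filter_subset_eq_card_cliqueLink {T : Finset V}
    (hT : G.IsClique (T : Set V)) (m : ℕ) :
    #((G.cliqueFinset (m + #T)).filter (T ⊆ ·)) = #(G.cliqueLink m T) := by
  refine card_nbij' (· \ T) (T ∪ ·) ?_ ?_ ?_ ?_
  · intro K hK
    simp only [mem_coe, mem_filter, mem_cliqueFinset_iff, isNClique_iff] at hK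
    obtain ⟨⟨hKc, hKcard⟩, hTK⟩ := hK
    simp only [cliqueLink, mem_coe, mem_filter, mem_cliqueFinset_iff, isNClique_iff, mem_sdiff]
    refine ⟨⟨hKc.subset (by simp), by rw [card_sdiff_of_subset hTK, hKcard]; omega⟩, ?_⟩
    rintro z ⟨hzK, hzT⟩ t ht
    exact hKc (hTK ht) hzK (ne_of_mem_of_not_mem ht hzT)
  · intro F hF
    simp only [cliqueLink, mem_coe, mem_filter, mem_cliqueFinset_iff, isNClique_iff] at hF
    obtain ⟨⟨hFc, hFcard⟩, hTF⟩ := hF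
    have hdisj : Disjoint T F := Finset.disjoint_left.mpr fun _ ht htF => (hTF _ htF _ ht).ne rfl
    simp only [mem_coe, mem_filter, mem_cliqueFinset_iff, isNClique_iff]
    refine ⟨⟨?_, by rw [card_union_of_disjoint hdisj, hFcard, add_comm]⟩, subset_union_left⟩
    rw [coe_union, IsClique, Set.pairwise_union]
    exact ⟨hT, hFc, fun t ht z hz _ => ⟨hTF z hz t ht, (hTF z hz t ht).symm⟩⟩
  · intro K hK
    exact union_sdiff_of_subset (mem_filter.mp hK).2
  · intro F hF
    have hTF := (mem_filter.mp hF).2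
    exact union_sdiff_cancel_left
      (Finset.disjoint_left.mpr fun _ ht htF => (hTF _ htF _ ht).ne rfl)

theorem mem_cliqueLink_pair {u v : V} {F : Finset V} :
    F ∈ G.cliqueLink m {u, v} ↔ F ∈ G.cliqueFinset m ∧ ∀ z ∈ F, G.Adj u z ∧ G.Adj v z := by
  simp [cliqueLink, forall_and]

variable (G) in
noncomputable def extensions (P : V → Fin r) (j : Fin r) (m : ℕ) (𝓕 : Finset (Finset V)) :
    Finset (Finset V) :=
  (G.cliqueFinset (m + 1)).filter fun K => K.filter (P · ≠ j) ∈ 𝓕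

theorem extensions_subset_cliqueFinset {j : Fin r} {𝓕 : Finset (Finset V)} :
    G.extensions P j m 𝓕 ⊆ G.cliqueFinset (m + 1) :=
  fun _ hK => (mem_filter.mp hK).1

theorem part_ne_of_mem_extensions {j k : Fin r} {𝓕 : Finset (Finset V)} (hjk : j ≠ k)
    (h𝓕 : ∀ F ∈ 𝓕, ∀ z ∈ F, P z ≠ k) {K : Finset V} (hK : K ∈ G.extensions P j m 𝓕) {z : V}
    (hz : z ∈ K) : P z ≠ k := by
  by_cases hzj : P z = j
  · exact hzj ▸ hjk
  · exact h𝓕 _ (mem_filter.mp hK).2 z (mem_filter.mpr ⟨hz, hzj⟩)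

theorem card_filter_part_mem (hP : ∀ u v, G.Adj u v → P u ≠ P v) {K : Finset V}
    (hK : K ∈ G.cliqueFinset r) (S : Finset (Fin r)) : #(K.filter (P · ∈ S)) = #S := by
  rw [mem_cliqueFinset_iff] at hK
  have hinj : Set.InjOn P K := fun a ha b hb hab =>
    by_contra fun hne => hP a b (hK.isClique ha hb hne) hab
  have himage : K.image P = univ :=
    eq_univ_of_card _ (by rw [card_image_of_injOn hinj, hK.card_eq, Fintype.card_fin])
  rw [← card_image_of_injOn (hinj.mono (filter_subset _ K)),
    show (K.filter (P · ∈ S)).image P = (K.image P).filter (· ∈ S) by rw [filter_image], himage]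
  simp

theorem card_filter_part_not_mem (hP : ∀ u v, G.Adj u v → P u ≠ P v) {K : Finset V}
    (hK : K ∈ G.cliqueFinset r) (S : Finset (Fin r)) : #(K.filter (P · ∉ S)) = r - #S := by
  have := card_filter_add_card_filter_not (s := K) (P · ∈ S)
  rw [card_filter_part_mem hP hK, (mem_cliqueFinset_iff.mp hK).card_eq] at this
  omega

theorem sum_card_commonNbrsIn_le_card_extensions {j : Fin r} {𝓕 : Finset (Finset V)}
    (h𝓕 : ∀ F ∈ 𝓕, F ∈ G.cliqueFinset m ∧ ∀ z ∈ F, P z ≠ j) :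
    ∑ F ∈ 𝓕, #(G.commonNbrsIn P j F) ≤ #(G.extensions P j m 𝓕) := by
  rw [← card_sigma]
  refine card_le_card_of_injOn (fun p => insert p.2 p.1) ?_ ?_
  · rintro ⟨F, x⟩ h
    simp only [mem_coe, mem_sigma, commonNbrsIn, mem_filter, mem_univ, true_and] at h
    obtain ⟨hF, hxj, hxF⟩ := h
    obtain ⟨hFc, hFj⟩ := h𝓕 F hF
    rw [mem_cliqueFinset_iff, isNClique_iff] at hFc
    simp only [extensions, mem_coe, mem_filter, mem_cliqueFinset_iff, isNClique_iff]
    refine ⟨⟨?_, by rw [card_insert_of_notMem fun h => hFj x h hxj, hFc.2]⟩, ?_⟩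
    · rw [coe_insert, isClique_insert]
      exact ⟨hFc.1, fun z hz _ => (hxF z hz).symm⟩
    · rwa [filter_ne_insert_of_eq hxj hFj]
  · rintro ⟨F₁, x₁⟩ h₁ ⟨F₂, x₂⟩ h₂ heq
    simp only [mem_coe, mem_sigma, commonNbrsIn, mem_filter, mem_univ, true_and] at h₁ h₂ heq
    have hF : F₁ = F₂ := by
      simpa only [filter_ne_insert_of_eq h₁.2.1 (h𝓕 F₁ h₁.1).2,
        filter_ne_insert_of_eq h₂.2.1 (h𝓕 F₂ h₂.1).2] using congrArg (filter (P · ≠ j)) heq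
    subst hF
    rw [insert_inj fun h => (h𝓕 F₁ h₁.1).2 x₁ h h₁.2.1] at heq
    rw [heq]

theorem card_extensions_le {j : Fin r} {𝓕 : Finset (Finset V)} (h𝓕 : ∀ F ∈ 𝓕, #F = m) :
    #(G.extensions P j m 𝓕) ≤ #𝓕 * #(univ.filter (P · = j)) := by
  rw [← card_product]
  refine (card_le_card ?_).trans (card_image_le (f := fun p => insert p.2 p.1))
  intro K hK
  simp only [extensions, mem_filter, mem_cliqueFinset_iff, isNClique_iff] at hK
  obtain ⟨⟨-, hKcard⟩, hF⟩ := hK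
  obtain ⟨x, hx⟩ : ∃ x, K.filter (P · = j) = {x} := by
    rw [← card_eq_one]
    have := card_filter_add_card_filter_not (s := K) (fun x => P x = j)
    have := h𝓕 _ hF
    simp only [ne_eq] at *
    omega
  have hxK : x ∈ K.filter (P · = j) := hx ▸ mem_singleton_self x
  have hxj : P x = j := (mem_filter.mp hxK).2
  refine mem_image.mpr ⟨(K.filter (P · ≠ j), x), mem_product.mpr ⟨hF, by simpa using hxj⟩, ?_⟩
  rw [insert_eq, ← hx, filter_union_filter_not_eq]

theorem card_mul_le_card_extensions (hsize : PartsOfSize P n) (hdeg : G.MinCrossDegree P δ n)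
    {j : Fin r} {𝓕 : Finset (Finset V)} (h𝓕 : ∀ F ∈ 𝓕, F ∈ G.cliqueFinset m ∧ ∀ z ∈ F, P z ≠ j) :
    (#𝓕 : ℝ) * (n - m * (δ * n)) ≤ #(G.extensions P j m 𝓕) := by
  calc (#𝓕 : ℝ) * (n - m * (δ * n)) = ∑ _F ∈ 𝓕, ((n : ℝ) - m * (δ * n)) := by
        rw [sum_const, nsmul_eq_mul]
    _ ≤ ∑ F ∈ 𝓕, (#(G.commonNbrsIn P j F) : ℝ) := sum_le_sum fun F hF => by
        have := card_commonNbrsIn_ge hsize hdeg (h𝓕 F hF).2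
        rwa [(mem_cliqueFinset_iff.mp (h𝓕 F hF).1).card_eq] at this
    _ ≤ _ := by exact_mod_cast sum_card_commonNbrsIn_le_card_extensions h𝓕

theorem card_filter_mem_cliqueFinset_mul_le (hP : ∀ u v, G.Adj u v → P u ≠ P v)
    (hsize : PartsOfSize P n) (hdeg : G.MinCrossDegree P δ n) (w : V) :
    (#((G.cliqueFinset (m + 1)).filter (w ∈ ·)) : ℝ) * (n - m * (δ * n))
      ≤ #(G.cliqueFinset (m + 1)) := by
  have hz : #((G.cliqueFinset (m + 1)).filter (w ∈ ·)) = #(G.cliqueLink m {w}) := by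
    simpa using card_cliqueFinset_filter_subset_eq_card_cliqueLink (T := {w}) (by simp) m
  have hlink : ∀ F ∈ G.cliqueLink m {w}, F ∈ G.cliqueFinset m ∧ ∀ z ∈ F, P z ≠ P w := by
    intro F hF
    simp only [cliqueLink, mem_filter, mem_singleton, forall_eq] at hF
    exact ⟨hF.1, fun z hz => (hP _ _ (hF.2 z hz)).symm⟩
  calc _ = (#(G.cliqueLink m {w}) : ℝ) * (n - m * (δ * n)) := by rw [hz]
    _ ≤ #(G.extensions P (P w) m (G.cliqueLink m {w})) :=
        card_mul_le_card_extensions hsize hdeg hlink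
    _ ≤ _ := Nat.cast_le.mpr (card_le_card extensions_subset_cliqueFinset)

theorem card_cliqueFinset_filter_pair_subset_eq {u v : V} (huv : G.Adj u v) :
    #((G.cliqueFinset (m + 2)).filter ({u, v} ⊆ ·)) = #(G.cliqueLink m {u, v}) := by
  have := card_cliqueFinset_filter_subset_eq_card_cliqueLink (T := {u, v})
    (by rw [coe_pair]; exact isClique_pair.mpr fun _ => huv) m
  rwa [card_pair huv.ne] at this

theorem card_filter_pair_subset_cliqueFinset_mul_le (hP : ∀ u v, G.Adj u v → P u ≠ P v)
    (hsize : PartsOfSize P n) (hdeg : G.MinCrossDegree P δ n) (hδ0 : 0 ≤ δ)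
    (hδ : (m + 1) * δ ≤ 1) {u v : V} (huv : G.Adj u v) :
    (#((G.cliqueFinset (m + 2)).filter ({u, v} ⊆ ·)) : ℝ) * ((1 - 2 * (m + 2) * δ) * n ^ 2)
      ≤ #(G.cliqueFinset (m + 2)) := by
  set 𝓛 := G.cliqueLink m {u, v}
  set 𝓔 := G.extensions P (P u) m 𝓛
  have hz := card_cliqueFinset_filter_pair_subset_eq (m := m) huv
  have hlink : ∀ F ∈ 𝓛, F ∈ G.cliqueFinset m ∧ ∀ z ∈ F, G.Adj u z ∧ G.Adj v z :=
    fun F hF => mem_cliqueLink_pair.mp hF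
  have h𝓛 : ∀ F ∈ 𝓛, F ∈ G.cliqueFinset m ∧ ∀ z ∈ F, P z ≠ P u := fun F hF =>
    ⟨(hlink F hF).1, fun z hz => (hP _ _ ((hlink F hF).2 z hz).1).symm⟩
  have h𝓔 : ∀ K ∈ 𝓔, K ∈ G.cliqueFinset (m + 1) ∧ ∀ z ∈ K, P z ≠ P v := fun K hK =>
    ⟨extensions_subset_cliqueFinset hK, fun z hz => part_ne_of_mem_extensions (hP u v huv)
      (fun F hF z hz => (hP _ _ ((hlink F hF).2 z hz).2).symm) hK hz⟩
  have h₁ := card_mul_le_card_extensions hsize hdeg h𝓛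
  have h₂ := card_mul_le_card_extensions hsize hdeg h𝓔
  have h₃ : (#(G.extensions P (P v) (m + 1) 𝓔) : ℝ) ≤ #(G.cliqueFinset (m + 2)) :=
    Nat.cast_le.mpr (card_le_card extensions_subset_cliqueFinset)
  push_cast at h₂
  have hc₂ : 0 ≤ (n : ℝ) - (m + 1) * (δ * n) := by nlinarith [n.cast_nonneg (α := ℝ)]
  have hc : (1 - 2 * (m + 2) * δ) * n ^ 2 ≤ (n - m * (δ * n)) * (n - (m + 1) * (δ * n)) := by
    have : (n - m * (δ * n)) * (n - (m + 1) * (δ * n)) - (1 - 2 * (m + 2) * δ) * n ^ 2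
        = (n : ℝ) ^ 2 * (3 * δ + m * (m + 1) * δ ^ 2) := by ring
    nlinarith [show (0 : ℝ) ≤ (n : ℝ) ^ 2 * (3 * δ + m * (m + 1) * δ ^ 2) by positivity]
  rw [hz]
  calc (#𝓛 : ℝ) * ((1 - 2 * (m + 2) * δ) * n ^ 2)
      ≤ #𝓛 * ((n - m * (δ * n)) * (n - (m + 1) * (δ * n))) := by gcongr
    _ ≤ #𝓔 * (n - (m + 1) * (δ * n)) := by
        rw [← mul_assoc]; exact mul_le_mul_of_nonneg_right h₁ hc₂
    _ ≤ _ := h₂.trans h₃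

theorem mem_extensions_extensions_cliqueLink {P : V → Fin (m + 2)}
    (hP : ∀ u v, G.Adj u v → P u ≠ P v) {u v : V} (huv : G.Adj u v) {K : Finset V}
    (hK : K ∈ G.cliqueFinset (m + 2))
    (hgood : ∀ z ∈ K, P z ≠ P u → P z ≠ P v → G.Adj u z ∧ G.Adj v z) :
    K ∈ G.extensions P (P v) (m + 1) (G.extensions P (P u) m (G.cliqueLink m {u, v})) := by
  have hKc := (mem_cliqueFinset_iff.mp hK).isClique
  have hKv : K.filter (P · ≠ P v) ∈ G.cliqueFinset (m + 1) := by
    refine mem_cliqueFinset_iff.mpr ⟨hKc.subset (coe_subset.mpr (filter_subset _ _)), ?_⟩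
    rw [filter_congr (q := (P · ∉ ({P v} : Finset (Fin (m + 2))))) (by simp),
      card_filter_part_not_mem hP hK, card_singleton]
    rfl
  have hKuv : (K.filter (P · ≠ P v)).filter (P · ≠ P u) ∈ G.cliqueLink m {u, v} := by
    rw [mem_cliqueLink_pair, filter_filter]
    refine ⟨mem_cliqueFinset_iff.mpr
      ⟨hKc.subset (coe_subset.mpr (filter_subset _ _)), ?_⟩, fun z hz => ?_⟩
    · rw [filter_congr (q := (P · ∉ ({P u, P v} : Finset (Fin (m + 2)))))
        (fun _ _ => by simp [and_comm]),
        card_filter_part_not_mem hP hK, card_pair (hP u v huv)]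
      rfl
    · obtain ⟨hzK, hzv, hzu⟩ := mem_filter.mp hz
      exact hgood z hzK hzu hzv
  exact mem_filter.mpr ⟨hK, mem_filter.mpr ⟨hKv, hKuv⟩⟩

theorem card_cliqueFinset_le_mul_add_sum {P : V → Fin (m + 2)}
    (hP : ∀ u v, G.Adj u v → P u ≠ P v) (hsize : PartsOfSize P n) {u v : V} (huv : G.Adj u v) :
    #(G.cliqueFinset (m + 2)) ≤ #((G.cliqueFinset (m + 2)).filter ({u, v} ⊆ ·)) * n * n +
      ∑ w ∈ G.crossNonNbrs P u ∪ G.crossNonNbrs P v,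
        #((G.cliqueFinset (m + 2)).filter (w ∈ ·)) := by
  set 𝓛 := G.cliqueLink m {u, v}
  set 𝓔 := G.extensions P (P u) m 𝓛
  set W := G.crossNonNbrs P u ∪ G.crossNonNbrs P v
  have hcover : G.cliqueFinset (m + 2) ⊆ G.extensions P (P v) (m + 1) 𝓔 ∪
      W.biUnion fun w => (G.cliqueFinset (m + 2)).filter (w ∈ ·) := by
    intro K hK
    by_cases hgood : ∀ z ∈ K, P z ≠ P u → P z ≠ P v → G.Adj u z ∧ G.Adj v z
    · exact mem_union_left _ (mem_extensions_extensions_cliqueLink hP huv hK hgood)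
    · push Not at hgood
      obtain ⟨z, hzK, hzu, hzv, hadj⟩ := hgood
      have hzW : z ∈ W := by
        by_cases huz : G.Adj u z
        · exact mem_union_right _ (mem_filter.mpr ⟨mem_univ z, hzv, hadj huz⟩)
        · exact mem_union_left _ (mem_filter.mpr ⟨mem_univ z, hzu, huz⟩)
      exact mem_union_right _ (mem_biUnion.mpr ⟨z, hzW, mem_filter.mpr ⟨hK, hzK⟩⟩)
  have h𝓛 : ∀ F ∈ 𝓛, #F = m := fun F hF =>
    (mem_cliqueFinset_iff.mp (mem_cliqueLink_pair.mp hF).1).card_eq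
  have h𝓔 : ∀ K ∈ 𝓔, #K = m + 1 := fun K hK =>
    (mem_cliqueFinset_iff.mp (extensions_subset_cliqueFinset hK)).card_eq
  have hext := card_extensions_le (G := G) (P := P) (j := P v) h𝓔
  have hext' := card_extensions_le (G := G) (P := P) (j := P u) h𝓛
  rw [card_cliqueFinset_filter_pair_subset_eq huv]
  rw [hsize] at hext hext'
  calc #(G.cliqueFinset (m + 2))
      ≤ #(G.extensions P (P v) (m + 1) 𝓔) + #(W.biUnion fun w =>
          (G.cliqueFinset (m + 2)).filter (w ∈ ·)) :=
        (card_le_card hcover).trans (card_union_le _ _)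
    _ ≤ #𝓛 * n * n + ∑ w ∈ W, #((G.cliqueFinset (m + 2)).filter (w ∈ ·)) := by
        gcongr
        · exact hext.trans (Nat.mul_le_mul_right n hext')
        · exact card_biUnion_le

theorem card_cliqueFinset_le_card_filter_pair_subset_add {P : V → Fin (m + 2)}
    (hP : ∀ u v, G.Adj u v → P u ≠ P v) (hsize : PartsOfSize P n) (hdeg : G.MinCrossDegree P δ n)
    (hδ0 : 0 ≤ δ) (hδ : (m + 2) * δ ≤ 1 / 8) (hn : 0 < n) {u v : V} (huv : G.Adj u v) :
    (#(G.cliqueFinset (m + 2)) : ℝ) ≤ #((G.cliqueFinset (m + 2)).filter ({u, v} ⊆ ·)) * n ^ 2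
      + 16 / 7 * ((m + 2) * δ) * #(G.cliqueFinset (m + 2)) := by
  set W := G.crossNonNbrs P u ∪ G.crossNonNbrs P v
  have hdecomp : (#(G.cliqueFinset (m + 2)) : ℝ) ≤
      #((G.cliqueFinset (m + 2)).filter ({u, v} ⊆ ·)) * n ^ 2 +
        ∑ w ∈ W, (#((G.cliqueFinset (m + 2)).filter (w ∈ ·)) : ℝ) := by
    rw [sq, ← mul_assoc]
    exact_mod_cast card_cliqueFinset_le_mul_add_sum hP hsize huv
  set k := (#(G.cliqueFinset (m + 2)) : ℝ)
  have hk : 0 ≤ k := Nat.cast_nonneg _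
  have hn' : (0 : ℝ) < n := Nat.cast_pos.mpr hn
  have hW : (#W : ℝ) ≤ 2 * ((m + 1) * (δ * n)) := by
    have hu := card_crossNonNbrs_le hsize hdeg u
    have hv := card_crossNonNbrs_le hsize hdeg v
    push_cast at hu hv
    have : (#W : ℝ) ≤ _ := Nat.cast_le.mpr (card_union_le _ _)
    push_cast at this
    linarith
  have hvertex : ∀ w, (#((G.cliqueFinset (m + 2)).filter (w ∈ ·)) : ℝ) * (7 / 8 * n) ≤ k := by
    intro w
    have h := card_filter_mem_cliqueFinset_mul_le (m := m + 1) hP hsize hdeg w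
    push_cast at h
    refine le_trans (mul_le_mul_of_nonneg_left ?_ (Nat.cast_nonneg _)) h
    nlinarith
  have hsum : (∑ w ∈ W, (#((G.cliqueFinset (m + 2)).filter (w ∈ ·)) : ℝ)) * (7 / 8 * n)
      ≤ (16 / 7 * ((m + 2) * δ) * k) * (7 / 8 * n) := by
    rw [sum_mul]
    refine (sum_le_card_nsmul _ _ k fun w _ => hvertex w).trans ?_
    rw [nsmul_eq_mul]
    calc (#W : ℝ) * k ≤ 2 * ((m + 1) * (δ * n)) * k := mul_le_mul_of_nonneg_right hW hk
      _ ≤ _ := by nlinarith [mul_nonneg (mul_nonneg hδ0 hn'.le) hk]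
  linarith [le_of_mul_le_mul_right hsum (by positivity)]

end SimpleGraph

theorem abs_sub_le_of_mul_le_of_le_add {x k a : ℝ} (hx : 0 ≤ x) (ha : 0 ≤ a) (ha' : a ≤ 1 / 8)
    (hupper : x * (1 - 2 * a) ≤ k) (hlower : k ≤ x + 16 / 7 * a * k) : |x - k| ≤ 9 * a * k := by
  have hk : 0 ≤ k := le_trans (mul_nonneg hx (by linarith)) hupper
  have hak : 0 ≤ a * k := mul_nonneg ha hk
  have hx' : x ≤ 4 / 3 * k := by nlinarith
  rw [abs_le]
  constructor <;> nlinarith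

open SimpleGraph in
theorem stmt_2_general {V : Type*} [Fintype V] [DecidableEq V] {r n : ℕ}
    (δ : ℝ) (hδ0 : 0 ≤ δ) (hδ1 : δ ≤ 1 / (8 * r))
    (G : SimpleGraph V) (P : V → Fin r)
    (hpart : ∀ u v, G.Adj u v → P u ≠ P v)
    (hsize : ∀ i : Fin r, (Finset.univ.filter fun v => P v = i).card = n)
    (hdeg : ∀ (j : Fin r) (v : V), P v ≠ j →
      (1 - δ) * n ≤ ((Finset.univ.filter fun u => P u = j ∧ G.Adj v u).card : ℝ)) :
    ∀ e ∈ G.edgeFinset,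
      |((((G.cliqueFinset r).filter fun K => ∀ x ∈ e, x ∈ K).card : ℝ)
          - ((G.cliqueFinset r).card : ℝ) / n ^ 2)|
        ≤ 9 * δ * r * ((G.cliqueFinset r).card : ℝ) / n ^ 2 := by
  intro e he
  induction e using Sym2.ind with | _ u v => ?_
  have huv : G.Adj u v := by simpa using he
  obtain ⟨m, rfl⟩ : ∃ m, r = m + 2 := by
    have := (P u).isLt
    have := (P v).isLt
    have := Fin.val_ne_of_ne (hpart u v huv)
    exact ⟨r - 2, by omega⟩
  have hn : 0 < n := hsize (P u) ▸ card_pos.mpr ⟨u, by simp⟩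
  have hrδ : (m + 2) * δ ≤ 1 / 8 := by
    rw [le_div_iff₀ (by positivity)] at hδ1
    push_cast at hδ1
    linarith
  have hupper :=
    card_filter_pair_subset_cliqueFinset_mul_le hpart hsize hdeg hδ0 (by linarith) huv
  have hlower :=
    card_cliqueFinset_le_card_filter_pair_subset_add hpart hsize hdeg hδ0 hrδ hn huv
  have hedge : ((G.cliqueFinset (m + 2)).filter fun K => ∀ x ∈ s(u, v), x ∈ K)
      = (G.cliqueFinset (m + 2)).filter ({u, v} ⊆ ·) :=
    filter_congr fun K _ => by simp [insert_subset_iff]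
  have hn2 : (0 : ℝ) < n ^ 2 := by positivity
  rw [hedge, sub_div' hn2.ne', abs_div, abs_of_pos hn2]
  refine div_le_div_of_nonneg_right ?_ hn2.le
  have := abs_sub_le_of_mul_le_of_le_add (by positivity) (by positivity) hrδ
    (by linarith [hupper]) hlower
  push_cast
  linarith

/-- for every edge e, |z_e − k/n²| ≤ 9δr·k/n². -/
theorem stmt_2 {V : Type*} [Fintype V] [DecidableEq V] {r n : ℕ} (hr : 3 ≤ r)
    (δ : ℝ) (hδ0 : 0 ≤ δ) (hδ1 : δ ≤ 1 / (8 * r))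
    (G : SimpleGraph V) (P : V → Fin r)
    (hpart : ∀ u v, G.Adj u v → P u ≠ P v)
    (hsize : ∀ i : Fin r, (Finset.univ.filter fun v => P v = i).card = n)
    (hdeg : ∀ (j : Fin r) (v : V), P v ≠ j →
      (1 - δ) * n ≤ ((Finset.univ.filter fun u => P u = j ∧ G.Adj v u).card : ℝ)) :
    ∀ e ∈ G.edgeFinset,
      |((((G.cliqueFinset r).filter fun K => ∀ x ∈ e, x ∈ K).card : ℝ)
          - ((G.cliqueFinset r).card : ℝ) / n ^ 2)|
        ≤ 9 * δ * r * ((G.cliqueFinset r).card : ℝ) / n ^ 2 :=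
  stmt_2_general δ hδ0 hδ1 G P hpart hsize hdeg
end

section
/- Let r ≥ 3 and n ≥ 8r², and let G be an r-partite graph on (V_1,...,V_r) with parts of size n and minimum cross-degree at least (1 − 1/(8r²))n. Fix j ∈ [r], distinct vertices v, v' ∈ V_j, and for each i ≠ j a vertex u_i ∈ V_i that is a common neighbour of v and v'. Then there exists a function ψ from the set of r-cliques of G to ℝ with total sum zero such that for every edge e of G, the sum of ψ(K) over r-cliques K containing e equals 1 if e = v u_i for some i ≠ j, equals −1 if e = v' u_i for some i ≠ j, and equals 0 otherwise. -/
open Finset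
open scoped Classical

lemma exists_good {V : Type*} [Fintype V] [DecidableEq V] {r n : ℕ} (hr : 3 ≤ r)
    (hn : 8 * r ^ 2 ≤ n)
    (G : SimpleGraph V) (P : V → Fin r)
    (hsize : ∀ i : Fin r, (Finset.univ.filter fun z => P z = i).card = n)
    (hdeg : ∀ (j : Fin r) (x : V), P x ≠ j →
      (1 - 1 / (8 * (r : ℝ) ^ 2)) * n ≤
        ((Finset.univ.filter fun y => P y = j ∧ G.Adj x y).card : ℝ))
    (i : Fin r) (S : Finset V) (hS : S.card ≤ 2 * r + 2) (hSP : ∀ x ∈ S, P x ≠ i)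
    (b : V) : ∃ z, P z = i ∧ z ≠ b ∧ ∀ x ∈ S, G.Adj x z := by
  by_contra h
  push_neg at h
  set A : Finset V := Finset.univ.filter fun z => P z = i with hA
  have hAcard : A.card = n := hsize i
  have hsub : A ⊆ insert b (S.biUnion fun x => A.filter fun z => ¬ G.Adj x z) := by
    intro z hz
    have hzP : P z = i := (Finset.mem_filter.1 hz).2
    by_cases hzb : z = b
    · exact Finset.mem_insert.2 (Or.inl hzb)
    · obtain ⟨x, hxS, hxz⟩ := h z hzP hzb
      exact Finset.mem_insert.2 (Or.inr (Finset.mem_biUnion.2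
        ⟨x, hxS, Finset.mem_filter.2 ⟨hz, hxz⟩⟩))
  have hr8 : (0:ℝ) < 8 * (r:ℝ)^2 := by
    have : (3:ℝ) ≤ r := by exact_mod_cast hr
    positivity
  have hx : ∀ x ∈ S, ((A.filter fun z => ¬ G.Adj x z).card : ℝ) ≤ n / (8 * (r:ℝ)^2) := by
    intro x hxS
    have hsplit : (A.filter fun z => G.Adj x z).card
        + (A.filter fun z => ¬ G.Adj x z).card = A.card :=
      Finset.card_filter_add_card_filter_not _
    have heq : A.filter (fun z => G.Adj x z) =
        Finset.univ.filter fun y => P y = i ∧ G.Adj x y := by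
      rw [hA, Finset.filter_filter]
    have hd := hdeg i x (hSP x hxS)
    rw [← heq] at hd
    have h1 : ((A.filter fun z => G.Adj x z).card : ℝ)
        + ((A.filter fun z => ¬ G.Adj x z).card : ℝ) = n := by
      exact_mod_cast hsplit.trans hAcard
    have : ((A.filter fun z => ¬ G.Adj x z).card : ℝ) ≤ n - (1 - 1/(8*(r:ℝ)^2)) * n := by
      linarith
    calc ((A.filter fun z => ¬ G.Adj x z).card : ℝ)
        ≤ n - (1 - 1/(8*(r:ℝ)^2)) * n := this
      _ = n / (8*(r:ℝ)^2) := by field_simp; try ring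
  have hcard : (n:ℝ) ≤ 1 + ∑ x ∈ S, ((A.filter fun z => ¬ G.Adj x z).card : ℝ) := by
    have h1 := Finset.card_le_card hsub
    have h2 := Finset.card_insert_le b (S.biUnion fun x => A.filter fun z => ¬ G.Adj x z)
    have h3 := Finset.card_biUnion_le (s := S) (t := fun x => A.filter fun z => ¬ G.Adj x z)
    have h4 : n ≤ 1 + ∑ x ∈ S, (A.filter fun z => ¬ G.Adj x z).card := by
      rw [← hAcard]; linarith
    calc (n:ℝ) = ((n:ℕ):ℝ) := rfl
      _ ≤ ((1 + ∑ x ∈ S, (A.filter fun z => ¬ G.Adj x z).card : ℕ) : ℝ) := by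
          exact_mod_cast h4
      _ = 1 + ∑ x ∈ S, ((A.filter fun z => ¬ G.Adj x z).card : ℝ) := by push_cast; ring
  have hsum : ∑ x ∈ S, ((A.filter fun z => ¬ G.Adj x z).card : ℝ)
      ≤ (S.card : ℝ) * (n / (8 * (r:ℝ)^2)) := by
    calc ∑ x ∈ S, ((A.filter fun z => ¬ G.Adj x z).card : ℝ)
        ≤ ∑ _x ∈ S, (n / (8 * (r:ℝ)^2)) := Finset.sum_le_sum hx
      _ = (S.card : ℝ) * (n / (8 * (r:ℝ)^2)) := by rw [Finset.sum_const, nsmul_eq_mul]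
  have hScard : (S.card : ℝ) ≤ 2 * (r:ℝ) + 2 := by exact_mod_cast hS
  have hnr : (8:ℝ) * (r:ℝ)^2 ≤ n := by exact_mod_cast hn
  have hrr : (3:ℝ) ≤ (r:ℝ) := by exact_mod_cast hr
  have hfrac : (0:ℝ) ≤ n / (8 * (r:ℝ)^2) := by positivity
  have hmain : (n:ℝ) ≤ 1 + (2 * (r:ℝ) + 2) * (n / (8 * (r:ℝ)^2)) := by
    have := mul_le_mul_of_nonneg_right hScard hfrac
    linarith
  have hclear : (n:ℝ) * (8 * (r:ℝ)^2) ≤ (8 * (r:ℝ)^2) + (2 * (r:ℝ) + 2) * n := by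
    have := mul_le_mul_of_nonneg_right hmain hr8.le
    calc (n:ℝ) * (8 * (r:ℝ)^2) ≤ (1 + (2*(r:ℝ)+2) * (n / (8*(r:ℝ)^2))) * (8*(r:ℝ)^2) := this
      _ = (8 * (r:ℝ)^2) + (2 * (r:ℝ) + 2) * n := by field_simp; try ring
  have hpos : (0:ℝ) ≤ 8*(r:ℝ)^2 - 2*(r:ℝ) - 3 := by nlinarith
  have hkey := mul_le_mul_of_nonneg_left hnr hpos
  nlinarith [hkey, hclear, hrr]

lemma greedy {V : Type*} [Fintype V] [DecidableEq V] {r n : ℕ} (hr : 3 ≤ r)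
    (hn : 8 * r ^ 2 ≤ n)
    (G : SimpleGraph V) (P : V → Fin r)
    (hsize : ∀ i : Fin r, (Finset.univ.filter fun z => P z = i).card = n)
    (hdeg : ∀ (j : Fin r) (x : V), P x ≠ j →
      (1 - 1 / (8 * (r : ℝ) ^ 2)) * n ≤
        ((Finset.univ.filter fun y => P y = j ∧ G.Adj x y).card : ℝ))
    (j : Fin r) (v v' : V) (hv : P v = j) (hv' : P v' = j)
    (u : Fin r → V) (hu : ∀ i, i ≠ j → P (u i) = i) :
    ∀ T : Finset (Fin r), j ∉ T → ∃ w : Fin r → V, ∀ i ∈ T,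
      P (w i) = i ∧ w i ≠ u i ∧ G.Adj v (w i) ∧ G.Adj v' (w i) ∧
      (∀ k, k ≠ j → k ≠ i → G.Adj (u k) (w i)) ∧
      (∀ k ∈ T, k ≠ i → G.Adj (w k) (w i)) := by
  intro T
  induction T using Finset.induction_on with
  | empty => exact fun _ => ⟨fun _ => v, by simp⟩
  | @insert a T ha ih =>
    intro hj
    have hja : a ≠ j := fun h => hj (h ▸ Finset.mem_insert_self a T)
    obtain ⟨w, hw⟩ := ih (fun h => hj (Finset.mem_insert_of_mem h))
    set S : Finset V := insert v (insert v'
      ((((Finset.univ : Finset (Fin r)).erase j).erase a).image u ∪ T.image w)) with hSdef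
    have hScard : S.card ≤ 2 * r + 2 := by
      have h1 : ((((Finset.univ : Finset (Fin r)).erase j).erase a).image u).card ≤ r :=
        le_trans (Finset.card_image_le) (le_trans (Finset.card_le_univ _) (by simp))
      have h2 : (T.image w).card ≤ r :=
        le_trans (Finset.card_image_le) (le_trans (Finset.card_le_univ _) (by simp))
      calc S.card ≤ (insert v'
          ((((Finset.univ : Finset (Fin r)).erase j).erase a).image u ∪ T.image w)).card + 1 :=
            Finset.card_insert_le _ _
        _ ≤ ((((Finset.univ : Finset (Fin r)).erase j).erase a).image u ∪ T.image w).card + 1 + 1 := by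
            have := Finset.card_insert_le v'
              ((((Finset.univ : Finset (Fin r)).erase j).erase a).image u ∪ T.image w)
            omega
        _ ≤ 2 * r + 2 := by
            have := Finset.card_union_le
              ((((Finset.univ : Finset (Fin r)).erase j).erase a).image u) (T.image w)
            omega
    have hSP : ∀ x ∈ S, P x ≠ a := by
      intro x hx
      rcases Finset.mem_insert.1 hx with h | hx
      · rw [h, hv]; exact fun hh => hja hh.symm
      rcases Finset.mem_insert.1 hx with h | hx
      · rw [h, hv']; exact fun hh => hja hh.symm
      rcases Finset.mem_union.1 hx with hx | hx
      · obtain ⟨k, hk, rfl⟩ := Finset.mem_image.1 hx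
        have hkj : k ≠ j := (Finset.mem_erase.1 (Finset.mem_erase.1 hk).2).1
        have hka : k ≠ a := (Finset.mem_erase.1 hk).1
        rw [hu k hkj]; exact hka
      · obtain ⟨k, hk, rfl⟩ := Finset.mem_image.1 hx
        have hka : k ≠ a := fun h => ha (h ▸ hk)
        rw [(hw k hk).1]; exact hka
    obtain ⟨z, hzP, hzb, hzadj⟩ := exists_good hr hn G P hsize hdeg a S hScard hSP (u a)
    refine ⟨Function.update w a z, ?_⟩
    have hvS : v ∈ S := Finset.mem_insert_self _ _
    have hv'S : v' ∈ S := Finset.mem_insert.2 (Or.inr (Finset.mem_insert_self _ _))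
    have huS : ∀ k, k ≠ j → k ≠ a → u k ∈ S := by
      intro k hk1 hk2
      refine Finset.mem_insert.2 (Or.inr (Finset.mem_insert.2 (Or.inr
        (Finset.mem_union.2 (Or.inl (Finset.mem_image.2 ⟨k, ?_, rfl⟩))))))
      exact Finset.mem_erase.2 ⟨hk2, Finset.mem_erase.2 ⟨hk1, Finset.mem_univ _⟩⟩
    have hwS : ∀ k ∈ T, w k ∈ S := by
      intro k hk
      exact Finset.mem_insert.2 (Or.inr (Finset.mem_insert.2 (Or.inr
        (Finset.mem_union.2 (Or.inr (Finset.mem_image.2 ⟨k, hk, rfl⟩))))))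
    intro i hi
    rcases Finset.mem_insert.1 hi with rfl | hiT
    · -- i = a
      rw [Function.update_self]
      refine ⟨hzP, hzb, hzadj v hvS, hzadj v' hv'S, ?_, ?_⟩
      · exact fun k hk1 hk2 => hzadj (u k) (huS k hk1 hk2)
      · intro k hk hka
        rcases Finset.mem_insert.1 hk with rfl | hkT
        · exact absurd rfl hka
        · rw [Function.update_of_ne (by rintro rfl; exact ha hkT) _ _]
          exact hzadj (w k) (hwS k hkT)
    · -- i ∈ T
      have hia : i ≠ a := fun h => ha (h ▸ hiT)
      rw [Function.update_of_ne hia _ _]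
      obtain ⟨p1, p2, p3, p4, p5, p6⟩ := hw i hiT
      refine ⟨p1, p2, p3, p4, p5, ?_⟩
      intro k hk hki
      rcases Finset.mem_insert.1 hk with rfl | hkT
      · rw [Function.update_self]
        exact G.adj_symm (hzadj (w i) (hwS i hiT))
      · rw [Function.update_of_ne (by rintro rfl; exact ha hkT) _ _]
        exact p6 k hkT hki

/-- the first gadget. -/
theorem stmt_3 {V : Type*} [Fintype V] [DecidableEq V] {r n : ℕ} (hr : 3 ≤ r)
    (hn : 8 * r ^ 2 ≤ n)
    (G : SimpleGraph V) (P : V → Fin r)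
    (hpart : ∀ u v, G.Adj u v → P u ≠ P v)
    (hsize : ∀ i : Fin r, (Finset.univ.filter fun v => P v = i).card = n)
    (hdeg : ∀ (j : Fin r) (x : V), P x ≠ j →
      (1 - 1 / (8 * (r : ℝ) ^ 2)) * n ≤
        ((Finset.univ.filter fun y => P y = j ∧ G.Adj x y).card : ℝ))
    (j : Fin r) (v v' : V) (hv : P v = j) (hv' : P v' = j) (hvv' : v ≠ v')
    (u : Fin r → V)
    (hu : ∀ i, i ≠ j → P (u i) = i ∧ G.Adj v (u i) ∧ G.Adj v' (u i)) :
    ∃ ψ : Finset V → ℝ,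
      (∑ K ∈ G.cliqueFinset r, ψ K = 0) ∧
      ∀ e ∈ G.edgeFinset,
        ∑ K ∈ (G.cliqueFinset r).filter (fun K => ∀ x ∈ e, x ∈ K), ψ K =
          (if ∃ i, i ≠ j ∧ e = s(v, u i) then (1 : ℝ) else 0)
            - (if ∃ i, i ≠ j ∧ e = s(v', u i) then (1 : ℝ) else 0) := by
  classical
  obtain ⟨w, hwmain⟩ := greedy hr hn G P hsize hdeg j v v' hv hv' u
    (fun i hi => (hu i hi).1) (Finset.univ.erase j) (Finset.notMem_erase _ _)
  have hw : ∀ i, i ≠ j → P (w i) = i ∧ w i ≠ u i ∧ G.Adj v (w i) ∧ G.Adj v' (w i) ∧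
      (∀ k, k ≠ j → k ≠ i → G.Adj (u k) (w i)) ∧
      (∀ k, k ≠ j → k ≠ i → G.Adj (w k) (w i)) := by
    intro i hi
    obtain ⟨p1, p2, p3, p4, p5, p6⟩ := hwmain i (Finset.mem_erase.2 ⟨hi, Finset.mem_univ _⟩)
    exact ⟨p1, p2, p3, p4, p5,
      fun k hk hki => p6 k (Finset.mem_erase.2 ⟨hk, Finset.mem_univ _⟩) hki⟩
  have hwP : ∀ i, i ≠ j → P (w i) = i := fun i hi => (hw i hi).1
  have hwu : ∀ i, i ≠ j → w i ≠ u i := fun i hi => (hw i hi).2.1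
  have hwv : ∀ i, i ≠ j → G.Adj v (w i) := fun i hi => (hw i hi).2.2.1
  have hwv' : ∀ i, i ≠ j → G.Adj v' (w i) := fun i hi => (hw i hi).2.2.2.1
  have hwadju : ∀ i k, i ≠ j → k ≠ j → k ≠ i → G.Adj (u k) (w i) :=
    fun i k hi hk hki => (hw i hi).2.2.2.2.1 k hk hki
  have hww : ∀ i k, i ≠ j → k ≠ j → k ≠ i → G.Adj (w k) (w i) :=
    fun i k hi hk hki => (hw i hi).2.2.2.2.2 k hk hki
  have huP : ∀ i, i ≠ j → P (u i) = i := fun i hi => (hu i hi).1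
  have huv : ∀ i, i ≠ j → G.Adj v (u i) := fun i hi => (hu i hi).2.1
  have huv' : ∀ i, i ≠ j → G.Adj v' (u i) := fun i hi => (hu i hi).2.2
  set t : Finset (Fin r) := Finset.univ.erase j with htdef
  have htcard : t.card = r - 1 := by
    rw [htdef, Finset.card_erase_of_mem (Finset.mem_univ _)]; simp
  set KK : Fin r → Finset V := fun i => insert v (insert (u i) ((t.erase i).image w))
    with hKKdef
  set KK' : Fin r → Finset V := fun i => insert v' (insert (u i) ((t.erase i).image w))
    with hKK'def
  set Wfull : Finset V := t.image w with hWdef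
  set L : Finset V := insert v Wfull with hLdef
  set L' : Finset V := insert v' Wfull with hL'def
  have hKKi : ∀ i, KK i = insert v (insert (u i) ((t.erase i).image w)) :=
    fun i => by rw [hKKdef]
  have hKK'i : ∀ i, KK' i = insert v' (insert (u i) ((t.erase i).image w)) :=
    fun i => by rw [hKK'def]
  -- clique memberships
  have hKgen : ∀ a, P a = j → (∀ k, k ≠ j → G.Adj a (w k)) → ∀ i, i ∈ t → G.Adj a (u i) →
      insert a (insert (u i) ((t.erase i).image w)) ∈ G.cliqueFinset r := by
    intro a haP haw i hit hau
    have hij : i ≠ j := (Finset.mem_erase.1 hit).1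
    rw [SimpleGraph.mem_cliqueFinset_iff]
    constructor
    · rw [SimpleGraph.isClique_iff]
      intro z1 hz1 z2 hz2 hne
      simp only [Finset.coe_insert, Set.mem_insert_iff, Finset.mem_coe, Finset.mem_insert,
        Finset.mem_image, Finset.mem_erase, htdef, Finset.mem_univ, and_true] at hz1 hz2
      rcases hz1 with rfl | rfl | ⟨k, ⟨hki, hkj⟩, rfl⟩ <;>
        rcases hz2 with rfl | rfl | ⟨m, ⟨hmi, hmj⟩, rfl⟩
      · exact absurd rfl hne
      · exact hau
      · exact haw m hmj
      · exact hau.symm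
      · exact absurd rfl hne
      · exact hwadju m i hmj hij (Ne.symm hmi)
      · exact (haw k hkj).symm
      · exact (hwadju k i hkj hij (Ne.symm hki)).symm
      · exact hww m k hmj hkj (fun h => hne (by rw [h]))
    · have hinj : Set.InjOn w ↑(t.erase i) := by
        intro a1 h1 a2 h2 heq
        have h1j : a1 ≠ j :=
          (Finset.mem_erase.1 (Finset.mem_erase.1 (Finset.mem_coe.1 h1)).2).1
        have h2j : a2 ≠ j :=
          (Finset.mem_erase.1 (Finset.mem_erase.1 (Finset.mem_coe.1 h2)).2).1
        rw [← hwP a1 h1j, ← hwP a2 h2j, heq]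
      have h1 : ((t.erase i).image w).card = r - 2 := by
        rw [Finset.card_image_of_injOn hinj, Finset.card_erase_of_mem hit, htcard]; omega
      have h2 : u i ∉ (t.erase i).image w := by
        intro hmem
        obtain ⟨k, hk, hkz⟩ := Finset.mem_image.1 hmem
        have hki : k ≠ i := (Finset.mem_erase.1 hk).1
        have hkj : k ≠ j := (Finset.mem_erase.1 (Finset.mem_erase.1 hk).2).1
        exact hki (by rw [← hwP k hkj, hkz, huP i hij])
      have h3 : a ∉ insert (u i) ((t.erase i).image w) := by
        intro hmem
        rcases Finset.mem_insert.1 hmem with h | h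
        · refine hij ?_
          rw [← huP i hij, ← h, haP]
        · obtain ⟨k, hk, hkz⟩ := Finset.mem_image.1 h
          have hkj : k ≠ j := (Finset.mem_erase.1 (Finset.mem_erase.1 hk).2).1
          exact hkj (by rw [← hwP k hkj, hkz, haP])
      rw [Finset.card_insert_of_notMem h3, Finset.card_insert_of_notMem h2, h1]
      omega
  have hLgen : ∀ a, P a = j → (∀ k, k ≠ j → G.Adj a (w k)) →
      insert a Wfull ∈ G.cliqueFinset r := by
    intro a haP haw
    rw [SimpleGraph.mem_cliqueFinset_iff]
    constructor
    · rw [SimpleGraph.isClique_iff]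
      intro z1 hz1 z2 hz2 hne
      simp only [hWdef, Finset.coe_insert, Set.mem_insert_iff, Finset.mem_coe,
        Finset.mem_image, Finset.mem_erase, htdef, Finset.mem_univ, and_true] at hz1 hz2
      rcases hz1 with rfl | ⟨k, hkj, rfl⟩ <;> rcases hz2 with rfl | ⟨m, hmj, rfl⟩
      · exact absurd rfl hne
      · exact haw m hmj
      · exact (haw k hkj).symm
      · exact hww m k hmj hkj (fun h => hne (by rw [h]))
    · have hinj : Set.InjOn w ↑t := by
        intro a1 h1 a2 h2 heq
        have h1j : a1 ≠ j := (Finset.mem_erase.1 (Finset.mem_coe.1 h1)).1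
        have h2j : a2 ≠ j := (Finset.mem_erase.1 (Finset.mem_coe.1 h2)).1
        rw [← hwP a1 h1j, ← hwP a2 h2j, heq]
      have h1 : Wfull.card = r - 1 := by
        rw [hWdef, Finset.card_image_of_injOn hinj, htcard]
      have h3 : a ∉ Wfull := by
        intro h
        obtain ⟨k, hk, hkz⟩ := Finset.mem_image.1 (hWdef ▸ h)
        have hkj : k ≠ j := (Finset.mem_erase.1 hk).1
        exact hkj (by rw [← hwP k hkj, hkz, haP])
      rw [Finset.card_insert_of_notMem h3, h1]
      omega
  have hKKin : ∀ i ∈ t, KK i ∈ G.cliqueFinset r := fun i hi =>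
    hKgen v hv (fun k hk => hwv k hk) i hi (huv i (Finset.mem_erase.1 hi).1)
  have hKK'in : ∀ i ∈ t, KK' i ∈ G.cliqueFinset r := fun i hi =>
    hKgen v' hv' (fun k hk => hwv' k hk) i hi (huv' i (Finset.mem_erase.1 hi).1)
  have hLin : L ∈ G.cliqueFinset r := hLgen v hv (fun k hk => hwv k hk)
  have hL'in : L' ∈ G.cliqueFinset r := hLgen v' hv' (fun k hk => hwv' k hk)
  -- membership characterizations
  have hmemKK : ∀ (z : V) (i : Fin r), i ≠ j → P z ≠ j →
      (z ∈ insert (u i) ((t.erase i).image w) ↔ (z = u i ∨ (P z ≠ i ∧ z = w (P z)))) := by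
    intro z i hij hzj
    simp only [Finset.mem_insert, Finset.mem_image, Finset.mem_erase, htdef,
      Finset.mem_univ, and_true]
    constructor
    · rintro (rfl | ⟨k, ⟨hki, hkj⟩, rfl⟩)
      · exact Or.inl rfl
      · exact Or.inr ⟨by rw [hwP k hkj]; exact hki, by rw [hwP k hkj]⟩
    · rintro (rfl | ⟨h1, h2⟩)
      · exact Or.inl rfl
      · exact Or.inr ⟨P z, ⟨h1, hzj⟩, h2.symm⟩
  have hmemW : ∀ z : V, P z ≠ j → (z ∈ Wfull ↔ z = w (P z)) := by
    intro z hzj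
    simp only [hWdef, Finset.mem_image, Finset.mem_erase, htdef, Finset.mem_univ, and_true]
    constructor
    · rintro ⟨k, hkj, rfl⟩
      rw [hwP k hkj]
    · intro h
      exact ⟨P z, hzj, h.symm⟩
  have hjnotin : ∀ (z : V) (i : Fin r), P z = j → i ≠ j →
      z ∉ insert (u i) ((t.erase i).image w) := by
    intro z i hzj hij hmem
    rcases Finset.mem_insert.1 hmem with h | h
    · rw [h, huP i hij] at hzj
      exact hij hzj
    · obtain ⟨k, hk, hkz⟩ := Finset.mem_image.1 h
      have hkj : k ≠ j := (Finset.mem_erase.1 (Finset.mem_erase.1 hk).2).1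
      rw [← hkz, hwP k hkj] at hzj
      exact hkj hzj
  have hjnotW : ∀ z : V, P z = j → z ∉ Wfull := by
    intro z hzj hmem
    obtain ⟨k, hk, hkz⟩ := Finset.mem_image.1 (hWdef ▸ hmem)
    have hkj : k ≠ j := (Finset.mem_erase.1 hk).1
    rw [← hkz, hwP k hkj] at hzj
    exact hkj hzj
  -- the core numeric identity
  have core : ∀ y : V, P y ≠ j →
      (∑ i ∈ t, (if y = u i ∨ (P y ≠ i ∧ y = w (P y)) then (1:ℝ) else 0))
        - ((r:ℝ) - 2) * (if y = w (P y) then (1:ℝ) else 0)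
      = (if ∃ i, i ≠ j ∧ y = u i then (1:ℝ) else 0) := by
    intro y hyj
    have hyt : P y ∈ t := Finset.mem_erase.2 ⟨hyj, Finset.mem_univ _⟩
    by_cases hyu : y = u (P y)
    · have h0 : ¬ y = w (P y) := by
        intro h
        exact hwu (P y) hyj (h ▸ hyu ▸ rfl : w (P y) = u (P y))
      rw [if_neg h0, mul_zero, sub_zero]
      have hcong : ∀ i ∈ t, (if y = u i ∨ (P y ≠ i ∧ y = w (P y)) then (1:ℝ) else 0)
          = if i = P y then (1:ℝ) else 0 := by
        intro i hi
        have hij : i ≠ j := (Finset.mem_erase.1 hi).1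
        by_cases h : i = P y
        · subst h
          rw [if_pos (Or.inl hyu), if_pos rfl]
        · rw [if_neg, if_neg h]
          rintro (h1 | ⟨h2, h3⟩)
          · exact h (by rw [h1, huP i hij])
          · exact h0 h3
      rw [Finset.sum_congr rfl hcong, Finset.sum_ite_eq' t (P y) (fun _ => (1:ℝ)),
        if_pos hyt, if_pos ⟨P y, hyj, hyu⟩]
    · by_cases hyw : y = w (P y)
      · rw [if_pos hyw, mul_one]
        have hcong : ∀ i ∈ t, (if y = u i ∨ (P y ≠ i ∧ y = w (P y)) then (1:ℝ) else 0)
            = 1 - (if i = P y then (1:ℝ) else 0) := by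
          intro i hi
          have hij : i ≠ j := (Finset.mem_erase.1 hi).1
          by_cases h : i = P y
          · subst h
            rw [if_pos rfl, if_neg]
            · ring
            · rintro (h1 | ⟨h2, h3⟩)
              · exact hyu h1
              · exact h2 rfl
          · rw [if_pos (Or.inr ⟨fun hh => h hh.symm, hyw⟩), if_neg h]
            ring
        rw [Finset.sum_congr rfl hcong, Finset.sum_sub_distrib,
          Finset.sum_ite_eq' t (P y) (fun _ => (1:ℝ)), if_pos hyt, Finset.sum_const,
          nsmul_eq_mul, htcard, if_neg]
        · have : ((r - 1 : ℕ) : ℝ) = (r : ℝ) - 1 := by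
            have : (1:ℕ) ≤ r := by omega
            push_cast [Nat.cast_sub this]
            ring
          rw [this]
          ring
        · rintro ⟨i, hij, h1⟩
          exact hyu (by rw [h1, huP i hij])
      · have hcong : ∀ i ∈ t, (if y = u i ∨ (P y ≠ i ∧ y = w (P y)) then (1:ℝ) else 0)
            = 0 := by
          intro i hi
          have hij : i ≠ j := (Finset.mem_erase.1 hi).1
          rw [if_neg]
          rintro (h1 | ⟨h2, h3⟩)
          · exact hyu (by rw [h1, huP i hij])
          · exact hyw h3
        rw [Finset.sum_congr rfl hcong, Finset.sum_const_zero, if_neg hyw, mul_zero,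
          sub_zero, if_neg]
        rintro ⟨i, hij, h1⟩
        exact hyu (by rw [h1, huP i hij])
  -- the key pointwise identity for edges
  have key : ∀ x y : V, G.Adj x y →
      (∑ i ∈ t, ((if x ∈ KK i ∧ y ∈ KK i then (1:ℝ) else 0)
          - (if x ∈ KK' i ∧ y ∈ KK' i then (1:ℝ) else 0)))
        - ((r:ℝ) - 2) * ((if x ∈ L ∧ y ∈ L then (1:ℝ) else 0)
          - (if x ∈ L' ∧ y ∈ L' then (1:ℝ) else 0))
      = (if ∃ i, i ≠ j ∧ s(x, y) = s(v, u i) then (1:ℝ) else 0)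
          - (if ∃ i, i ≠ j ∧ s(x, y) = s(v', u i) then (1:ℝ) else 0) := by
    have key1 : ∀ x y : V, G.Adj x y → P x = j →
        (∑ i ∈ t, ((if x ∈ KK i ∧ y ∈ KK i then (1:ℝ) else 0)
            - (if x ∈ KK' i ∧ y ∈ KK' i then (1:ℝ) else 0)))
          - ((r:ℝ) - 2) * ((if x ∈ L ∧ y ∈ L then (1:ℝ) else 0)
            - (if x ∈ L' ∧ y ∈ L' then (1:ℝ) else 0))
        = (if ∃ i, i ≠ j ∧ s(x, y) = s(v, u i) then (1:ℝ) else 0)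
            - (if ∃ i, i ≠ j ∧ s(x, y) = s(v', u i) then (1:ℝ) else 0) := by
      intro x y hxy hxj
      have hyj : P y ≠ j := fun h => hpart x y hxy (by rw [hxj, h])
      have hyv : y ≠ v := fun h => hyj (by rw [h, hv])
      have hyv' : y ≠ v' := fun h => hyj (by rw [h, hv'])
      have hyKK : ∀ i, i ≠ j → (y ∈ KK i ↔ (y = u i ∨ (P y ≠ i ∧ y = w (P y)))) := by
        intro i hij
        rw [hKKi i, Finset.mem_insert, hmemKK y i hij hyj]
        constructor
        · rintro (h | h)
          · exact absurd h hyv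
          · exact h
        · exact Or.inr
      have hyKK' : ∀ i, i ≠ j → (y ∈ KK' i ↔ (y = u i ∨ (P y ≠ i ∧ y = w (P y)))) := by
        intro i hij
        rw [hKK'i i, Finset.mem_insert, hmemKK y i hij hyj]
        constructor
        · rintro (h | h)
          · exact absurd h hyv'
          · exact h
        · exact Or.inr
      have hyL : y ∈ L ↔ y = w (P y) := by
        rw [hLdef, Finset.mem_insert, hmemW y hyj]
        constructor
        · rintro (h | h)
          · exact absurd h hyv
          · exact h
        · exact Or.inr
      have hyL' : y ∈ L' ↔ y = w (P y) := by
        rw [hL'def, Finset.mem_insert, hmemW y hyj]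
        constructor
        · rintro (h | h)
          · exact absurd h hyv'
          · exact h
        · exact Or.inr
      have huij : ∀ z : V, P z = j → ∀ i, i ≠ j → z ≠ u i := by
        intro z hz i hij h
        exact hij (by rw [← huP i hij, ← h, hz])
      by_cases hxv : x = v
      · have hxKK : ∀ i, x ∈ KK i := fun i => by
          rw [hKKi i]; exact Finset.mem_insert.2 (Or.inl hxv)
        have hxKK' : ∀ i, i ≠ j → x ∉ KK' i := by
          intro i hij hmem
          rw [hKK'i i, Finset.mem_insert] at hmem
          rcases hmem with h | h
          · exact hvv' (hxv.symm.trans h)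
          · exact hjnotin x i hxj hij h
        have hxL : x ∈ L := by
          rw [hLdef]; exact Finset.mem_insert.2 (Or.inl hxv)
        have hxL' : x ∉ L' := by
          intro hmem
          rw [hL'def, Finset.mem_insert] at hmem
          rcases hmem with h | h
          · exact hvv' (hxv.symm.trans h)
          · exact hjnotW x hxj h
        have hcong : ∀ i ∈ t, ((if x ∈ KK i ∧ y ∈ KK i then (1:ℝ) else 0)
            - (if x ∈ KK' i ∧ y ∈ KK' i then (1:ℝ) else 0))
            = (if y = u i ∨ (P y ≠ i ∧ y = w (P y)) then (1:ℝ) else 0) := by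
          intro i hi
          have hij : i ≠ j := (Finset.mem_erase.1 hi).1
          rw [if_neg (fun hc : x ∈ KK' i ∧ y ∈ KK' i => hxKK' i hij hc.1), sub_zero]
          exact if_congr ⟨fun hc => (hyKK i hij).1 hc.2,
            fun hc => ⟨hxKK i, (hyKK i hij).2 hc⟩⟩ rfl rfl
        have hLcong : ((if x ∈ L ∧ y ∈ L then (1:ℝ) else 0)
            - (if x ∈ L' ∧ y ∈ L' then (1:ℝ) else 0))
            = (if y = w (P y) then (1:ℝ) else 0) := by
          rw [if_neg (fun hc : x ∈ L' ∧ y ∈ L' => hxL' hc.1), sub_zero]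
          exact if_congr ⟨fun hc => hyL.1 hc.2, fun hc => ⟨hxL, hyL.2 hc⟩⟩ rfl rfl
        have hr1 : (∃ i, i ≠ j ∧ s(x, y) = s(v, u i)) ↔ (∃ i, i ≠ j ∧ y = u i) := by
          constructor
          · rintro ⟨i, hij, heq⟩
            rcases Sym2.eq_iff.1 heq with ⟨h1, h2⟩ | ⟨h1, h2⟩
            · exact ⟨i, hij, h2⟩
            · exact absurd h1 (huij x hxj i hij)
          · rintro ⟨i, hij, h⟩
            exact ⟨i, hij, by rw [hxv, h]⟩
        have hr2 : ¬ (∃ i, i ≠ j ∧ s(x, y) = s(v', u i)) := by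
          rintro ⟨i, hij, heq⟩
          rcases Sym2.eq_iff.1 heq with ⟨h1, h2⟩ | ⟨h1, h2⟩
          · exact hvv' (hxv.symm.trans h1)
          · exact huij x hxj i hij h1
        rw [Finset.sum_congr rfl hcong, hLcong, if_neg hr2, sub_zero,
          if_congr hr1 rfl rfl]
        exact core y hyj
      · by_cases hxv' : x = v'
        · have hxKK' : ∀ i, x ∈ KK' i := fun i => by
            rw [hKK'i i]; exact Finset.mem_insert.2 (Or.inl hxv')
          have hxKK : ∀ i, i ≠ j → x ∉ KK i := by
            intro i hij hmem
            rw [hKKi i, Finset.mem_insert] at hmem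
            rcases hmem with h | h
            · exact hxv h
            · exact hjnotin x i hxj hij h
          have hxL' : x ∈ L' := by
            rw [hL'def]; exact Finset.mem_insert.2 (Or.inl hxv')
          have hxL : x ∉ L := by
            intro hmem
            rw [hLdef, Finset.mem_insert] at hmem
            rcases hmem with h | h
            · exact hxv h
            · exact hjnotW x hxj h
          have hcong : ∀ i ∈ t, ((if x ∈ KK i ∧ y ∈ KK i then (1:ℝ) else 0)
              - (if x ∈ KK' i ∧ y ∈ KK' i then (1:ℝ) else 0))
              = -(if y = u i ∨ (P y ≠ i ∧ y = w (P y)) then (1:ℝ) else 0) := by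
            intro i hi
            have hij : i ≠ j := (Finset.mem_erase.1 hi).1
            rw [if_neg (fun hc : x ∈ KK i ∧ y ∈ KK i => hxKK i hij hc.1), zero_sub]
            rw [if_congr ⟨fun hc : x ∈ KK' i ∧ y ∈ KK' i => (hyKK' i hij).1 hc.2,
              fun hc => ⟨hxKK' i, (hyKK' i hij).2 hc⟩⟩ rfl rfl]
          have hLcong : ((if x ∈ L ∧ y ∈ L then (1:ℝ) else 0)
              - (if x ∈ L' ∧ y ∈ L' then (1:ℝ) else 0))
              = -(if y = w (P y) then (1:ℝ) else 0) := by
            rw [if_neg (fun hc : x ∈ L ∧ y ∈ L => hxL hc.1), zero_sub]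
            rw [if_congr ⟨fun hc : x ∈ L' ∧ y ∈ L' => hyL'.1 hc.2,
              fun hc => ⟨hxL', hyL'.2 hc⟩⟩ rfl rfl]
          have hr1 : ¬ (∃ i, i ≠ j ∧ s(x, y) = s(v, u i)) := by
            rintro ⟨i, hij, heq⟩
            rcases Sym2.eq_iff.1 heq with ⟨h1, h2⟩ | ⟨h1, h2⟩
            · exact hxv h1
            · exact huij x hxj i hij h1
          have hr2 : (∃ i, i ≠ j ∧ s(x, y) = s(v', u i)) ↔ (∃ i, i ≠ j ∧ y = u i) := by
            constructor
            · rintro ⟨i, hij, heq⟩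
              rcases Sym2.eq_iff.1 heq with ⟨h1, h2⟩ | ⟨h1, h2⟩
              · exact ⟨i, hij, h2⟩
              · exact absurd h1 (huij x hxj i hij)
            · rintro ⟨i, hij, h⟩
              exact ⟨i, hij, by rw [hxv', h]⟩
          rw [Finset.sum_congr rfl hcong, hLcong, if_neg hr1,
            if_congr hr2 rfl rfl, Finset.sum_neg_distrib]
          have hc := core y hyj
          linarith
        · have hxKK : ∀ i, i ≠ j → x ∉ KK i := by
            intro i hij hmem
            rw [hKKi i, Finset.mem_insert] at hmem
            rcases hmem with h | h
            · exact hxv h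
            · exact hjnotin x i hxj hij h
          have hxKK' : ∀ i, i ≠ j → x ∉ KK' i := by
            intro i hij hmem
            rw [hKK'i i, Finset.mem_insert] at hmem
            rcases hmem with h | h
            · exact hxv' h
            · exact hjnotin x i hxj hij h
          have hxL : x ∉ L := by
            intro hmem
            rw [hLdef, Finset.mem_insert] at hmem
            rcases hmem with h | h
            · exact hxv h
            · exact hjnotW x hxj h
          have hxL' : x ∉ L' := by
            intro hmem
            rw [hL'def, Finset.mem_insert] at hmem
            rcases hmem with h | h
            · exact hxv' h
            · exact hjnotW x hxj h
          have hcong : ∀ i ∈ t, ((if x ∈ KK i ∧ y ∈ KK i then (1:ℝ) else 0)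
              - (if x ∈ KK' i ∧ y ∈ KK' i then (1:ℝ) else 0)) = 0 := by
            intro i hi
            have hij : i ≠ j := (Finset.mem_erase.1 hi).1
            rw [if_neg (fun hc : x ∈ KK i ∧ y ∈ KK i => hxKK i hij hc.1),
              if_neg (fun hc : x ∈ KK' i ∧ y ∈ KK' i => hxKK' i hij hc.1), sub_zero]
          have hr1 : ¬ (∃ i, i ≠ j ∧ s(x, y) = s(v, u i)) := by
            rintro ⟨i, hij, heq⟩
            rcases Sym2.eq_iff.1 heq with ⟨h1, h2⟩ | ⟨h1, h2⟩
            · exact hxv h1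
            · exact huij x hxj i hij h1
          have hr2 : ¬ (∃ i, i ≠ j ∧ s(x, y) = s(v', u i)) := by
            rintro ⟨i, hij, heq⟩
            rcases Sym2.eq_iff.1 heq with ⟨h1, h2⟩ | ⟨h1, h2⟩
            · exact hxv' h1
            · exact huij x hxj i hij h1
          rw [Finset.sum_congr rfl hcong, Finset.sum_const_zero,
            if_neg (fun hc : x ∈ L ∧ y ∈ L => hxL hc.1),
            if_neg (fun hc : x ∈ L' ∧ y ∈ L' => hxL' hc.1),
            if_neg hr1, if_neg hr2]
          ring
    intro x y hxy
    by_cases hxj : P x = j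
    · exact key1 x y hxy hxj
    · by_cases hyj : P y = j
      · have hk := key1 y x hxy.symm hyj
        have hswap : ∀ C : Finset V, (x ∈ C ∧ y ∈ C) = (y ∈ C ∧ x ∈ C) :=
          fun C => propext and_comm
        have heswap : (s(x, y) : Sym2 V) = s(y, x) := Sym2.eq_swap
        simp only [hswap, heswap]
        exact hk
      · have hxv : x ≠ v := fun h => hxj (by rw [h, hv])
        have hxv' : x ≠ v' := fun h => hxj (by rw [h, hv'])
        have hyv : y ≠ v := fun h => hyj (by rw [h, hv])
        have hyv' : y ≠ v' := fun h => hyj (by rw [h, hv'])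
        have hKKiff : ∀ (z : V) (i : Fin r), z ≠ v → z ≠ v' →
            (z ∈ KK i ↔ z ∈ KK' i) := by
          intro z i hzv hzv'
          rw [hKKi i, hKK'i i]
          simp only [Finset.mem_insert]
          constructor
          · rintro (h | h)
            · exact absurd h hzv
            · exact Or.inr h
          · rintro (h | h)
            · exact absurd h hzv'
            · exact Or.inr h
        have hLiff : ∀ z : V, z ≠ v → z ≠ v' → (z ∈ L ↔ z ∈ L') := by
          intro z hzv hzv'
          rw [hLdef, hL'def]
          simp only [Finset.mem_insert]
          constructor
          · rintro (h | h)
            · exact absurd h hzv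
            · exact Or.inr h
          · rintro (h | h)
            · exact absurd h hzv'
            · exact Or.inr h
        have hcong : ∀ i ∈ t, ((if x ∈ KK i ∧ y ∈ KK i then (1:ℝ) else 0)
            - (if x ∈ KK' i ∧ y ∈ KK' i then (1:ℝ) else 0)) = 0 := by
          intro i hi
          rw [if_congr (and_congr (hKKiff x i hxv hxv')
            (hKKiff y i hyv hyv')) rfl rfl, sub_self]
        have hLcong : ((if x ∈ L ∧ y ∈ L then (1:ℝ) else 0)
            - (if x ∈ L' ∧ y ∈ L' then (1:ℝ) else 0)) = 0 := by
          rw [if_congr (and_congr (hLiff x hxv hxv') (hLiff y hyv hyv')) rfl rfl, sub_self]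
        have hr1 : ¬ (∃ i, i ≠ j ∧ s(x, y) = s(v, u i)) := by
          rintro ⟨i, hij, heq⟩
          rcases Sym2.eq_iff.1 heq with ⟨h1, h2⟩ | ⟨h1, h2⟩
          · exact hxv h1
          · exact hyv h2
        have hr2 : ¬ (∃ i, i ≠ j ∧ s(x, y) = s(v', u i)) := by
          rintro ⟨i, hij, heq⟩
          rcases Sym2.eq_iff.1 heq with ⟨h1, h2⟩ | ⟨h1, h2⟩
          · exact hxv' h1
          · exact hyv' h2
        rw [Finset.sum_congr rfl hcong, Finset.sum_const_zero, hLcong,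
          if_neg hr1, if_neg hr2]
        ring
  -- now the construction
  have hsum1 : ∀ (s : Finset (Finset V)) (C : Finset V),
      ∑ K ∈ s, (if K = C then (1:ℝ) else 0) = if C ∈ s then 1 else 0 :=
    fun s C => Finset.sum_ite_eq' s C (fun _ => (1:ℝ))
  refine ⟨fun K => (∑ i ∈ t, ((if K = KK i then (1:ℝ) else 0)
      - (if K = KK' i then (1:ℝ) else 0)))
      - ((r:ℝ) - 2) * ((if K = L then (1:ℝ) else 0) - (if K = L' then (1:ℝ) else 0)),
    ?_, ?_⟩
  · rw [Finset.sum_sub_distrib, Finset.sum_comm]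
    have e1 : ∀ i ∈ t, (∑ K ∈ G.cliqueFinset r,
        ((if K = KK i then (1:ℝ) else 0) - (if K = KK' i then (1:ℝ) else 0))) = 0 := by
      intro i hi
      rw [Finset.sum_sub_distrib, hsum1, hsum1, if_pos (hKKin i hi), if_pos (hKK'in i hi)]
      ring
    rw [Finset.sum_congr rfl e1, Finset.sum_const_zero, ← Finset.mul_sum,
      Finset.sum_sub_distrib, hsum1, hsum1, if_pos hLin, if_pos hL'in]
    ring
  · intro e he
    induction e using Sym2.ind with
    | _ x y =>
      have hadj : G.Adj x y := by
        rwa [SimpleGraph.mem_edgeFinset, SimpleGraph.mem_edgeSet] at he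
      have hsub : ∀ C : Finset V, (∀ z ∈ s(x, y), z ∈ C) ↔ (x ∈ C ∧ y ∈ C) := by
        intro C
        constructor
        · intro h
          exact ⟨h x (Sym2.mem_mk_left _ _), h y (Sym2.mem_mk_right _ _)⟩
        · rintro ⟨h1, h2⟩ z hz
          rcases Sym2.mem_iff.1 hz with rfl | rfl
          · exact h1
          · exact h2
      have hsum2 : ∀ C, C ∈ G.cliqueFinset r →
          ∑ K ∈ (G.cliqueFinset r).filter (fun K => ∀ z ∈ s(x, y), z ∈ K),
            (if K = C then (1:ℝ) else 0) = if x ∈ C ∧ y ∈ C then 1 else 0 := by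
        intro C hC
        rw [hsum1]
        by_cases hxy : x ∈ C ∧ y ∈ C
        · rw [if_pos (Finset.mem_filter.2 ⟨hC, (hsub C).2 hxy⟩), if_pos hxy]
        · rw [if_neg, if_neg hxy]
          intro hmem
          exact hxy ((hsub C).1 (Finset.mem_filter.1 hmem).2)
      rw [Finset.sum_sub_distrib, Finset.sum_comm]
      have e1 : ∀ i ∈ t, (∑ K ∈ (G.cliqueFinset r).filter (fun K => ∀ z ∈ s(x, y), z ∈ K),
          ((if K = KK i then (1:ℝ) else 0) - (if K = KK' i then (1:ℝ) else 0)))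
          = ((if x ∈ KK i ∧ y ∈ KK i then (1:ℝ) else 0)
            - (if x ∈ KK' i ∧ y ∈ KK' i then (1:ℝ) else 0)) := by
        intro i hi
        rw [Finset.sum_sub_distrib, hsum2 _ (hKKin i hi), hsum2 _ (hKK'in i hi)]
      have e2 : ∑ K ∈ (G.cliqueFinset r).filter (fun K => ∀ z ∈ s(x, y), z ∈ K),
          ((if K = L then (1:ℝ) else 0) - (if K = L' then (1:ℝ) else 0))
          = ((if x ∈ L ∧ y ∈ L then (1:ℝ) else 0) - (if x ∈ L' ∧ y ∈ L' then (1:ℝ) else 0)) := by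
        rw [Finset.sum_sub_distrib, hsum2 _ hLin, hsum2 _ hL'in]
      rw [Finset.sum_congr rfl e1, ← Finset.mul_sum, e2]
      exact key x y hadj
end

section
/- Let r ≥ 3 and n ≥ 16r, and let G be an r-partite graph on (V_1,...,V_r) with parts of size n and minimum cross-degree at least (1 − 1/(16r))n. Fix distinct parts indexed i, j, distinct vertices v, v' ∈ V_i and distinct vertices u_1, u_2 ∈ V_j with all four edges v u_1, v u_2, v' u_1, v' u_2 present in G. Then there is a zero-sum function ψ on the r-cliques of G such that for each edge e, the total ψ-weight on e is 1 if e ∈ {v u_1, v' u_2}, is −1 if e ∈ {v u_2, v' u_1}, and is 0 otherwise; moreover |ψ(K)| ≤ 2n²/k for every r-clique K, where k is the number of r-cliques of G. -/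
open Finset
open scoped Classical

/-!
Let `M` be the set of cliques with one vertex in each part other than `V_i, V_j` all of whose
vertices are adjacent to `v, v', u₁, u₂`. Each `S ∈ M` extends to the four `r`-cliques
`S + a + b`, `a ∈ {v, v'}`, `b ∈ {u₁, u₂}`; put `ψ = ±1/|M|` on them, with sign `+` for
`v u₁, v' u₂`. For fixed `S`, the signed number of these four cliques containing an edge `xy` is a
mixed second difference in `(a, b)`, hence only sees whether `{x, y} = {a, b}`: this gives the
prescribed edge weights and total weight `0`. No clique contains both `v` and `v'`, so
`|ψ| ≤ 1/|M|`.

It remains to show `k ≤ 2 n² |M|`. Let `T` be the set of all transversal cliques on the parts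
other than `V_i, V_j`, so `k ≤ n² |T|`. Extending transversal cliques one part at a time, the
degree condition shows that every such clique has at least `15n/16` extensions to any further
part; hence a fixed vertex lies in at most a `16/(15n)` fraction of `T`. A clique of `T \ M`
contains one of the at most `4 · n/16` non-neighbours of `v, v', u₁, u₂` in the other parts, so
`|T \ M| ≤ (4/15) |T|` and `|T| ≤ 2 |M|`.
-/

noncomputable section

section CycleGadget

variable {V : Type*}

def edgeIndicator (e : Sym2 V) (K : Finset V) : ℝ :=
  if ∀ x ∈ e, x ∈ K then 1 else 0

lemma ite_forall_mem_eq_mul_edgeIndicator (e : Sym2 V) (K : Finset V) (a : ℝ)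
    [Decidable (∀ x ∈ e, x ∈ K)] :
    (if ∀ x ∈ e, x ∈ K then a else 0) = a * edgeIndicator e K := by
  unfold edgeIndicator; split_ifs <;> simp

variable [DecidableEq V]

def liftIndicator (M : Finset (Finset V)) (a b : V) (K : Finset V) : ℝ :=
  if K ∈ M.image (fun S => insert a (insert b S)) then 1 else 0

def cycleGadget (M : Finset (Finset V)) (v v' u₁ u₂ : V) (K : Finset V) : ℝ :=
  (#M : ℝ)⁻¹ * (liftIndicator M v u₁ K + liftIndicator M v' u₂ K
    - liftIndicator M v u₂ K - liftIndicator M v' u₁ K)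

lemma sum_liftIndicator_mul {M C : Finset (Finset V)} {a b : V}
    (hinj : Set.InjOn (fun S => insert a (insert b S)) (M : Set (Finset V)))
    (hmem : ∀ S ∈ M, insert a (insert b S) ∈ C) (h : Finset V → ℝ) :
    ∑ K ∈ C, liftIndicator M a b K * h K = ∑ S ∈ M, h (insert a (insert b S)) := by
  simp only [liftIndicator, ite_mul, one_mul, zero_mul]
  rw [sum_ite_mem, inter_eq_right.2 (image_subset_iff.2 hmem), sum_image hinj]

lemma liftIndicator_nonneg (M : Finset (Finset V)) (a b : V) (K : Finset V) :
    0 ≤ liftIndicator M a b K := by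
  unfold liftIndicator; split_ifs <;> norm_num

lemma liftIndicator_le_one (M : Finset (Finset V)) (a b : V) (K : Finset V) :
    liftIndicator M a b K ≤ 1 := by
  unfold liftIndicator; split_ifs <;> norm_num

lemma liftIndicator_eq_zero {M : Finset (Finset V)} {a b : V} {K : Finset V} (ha : a ∉ K) :
    liftIndicator M a b K = 0 := by
  rw [liftIndicator, if_neg]
  rintro h
  obtain ⟨S, -, rfl⟩ := mem_image.1 h
  exact ha (mem_insert_self _ _)

lemma abs_cycleGadget_le {M : Finset (Finset V)} {v v' u₁ u₂ : V} {K : Finset V}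
    (hK : ¬(v ∈ K ∧ v' ∈ K)) : |cycleGadget M v v' u₁ u₂ K| ≤ (#M : ℝ)⁻¹ := by
  have hle : liftIndicator M v u₁ K + liftIndicator M v' u₂ K ≤ 1 ∧
      liftIndicator M v u₂ K + liftIndicator M v' u₁ K ≤ 1 := by
    by_cases hv : v ∈ K
    · simp only [liftIndicator_eq_zero fun h => hK ⟨hv, h⟩, add_zero]
      exact ⟨liftIndicator_le_one _ _ _ _, liftIndicator_le_one _ _ _ _⟩
    · simp only [liftIndicator_eq_zero hv, zero_add]
      exact ⟨liftIndicator_le_one _ _ _ _, liftIndicator_le_one _ _ _ _⟩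
  rw [cycleGadget, abs_mul, abs_of_nonneg (by positivity)]
  refine mul_le_of_le_one_right (by positivity) (abs_le.2 ⟨?_, ?_⟩)
  · linarith [liftIndicator_nonneg M v u₁ K, liftIndicator_nonneg M v' u₂ K]
  · linarith [liftIndicator_nonneg M v u₂ K, liftIndicator_nonneg M v' u₁ K]

lemma ite_or_eq_add {p q : Prop} [Decidable p] [Decidable q] (h : ¬(p ∧ q)) :
    (if p ∨ q then (1 : ℝ) else 0) = (if p then 1 else 0) + (if q then 1 else 0) := by
  by_cases hp : p <;> by_cases hq : q <;> simp_all

lemma indicator_mem_insert_insert {a b z : V} {S : Finset V} (hab : a ≠ b) (ha : a ∉ S)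
    (hb : b ∉ S) : (if z ∈ insert a (insert b S) then (1 : ℝ) else 0) =
      (if z = a then 1 else 0) + (if z = b then 1 else 0) + (if z ∈ S then 1 else 0) := by
  by_cases hza : z = a
  · subst hza; simp [hab, ha]
  · by_cases hzb : z = b
    · subst hzb; simp [hb, hza]
    · simp [hza, hzb]

lemma indicator_sym2_eq {a b x y : V} (hab : a ≠ b) :
    (if s(x, y) = s(a, b) then (1 : ℝ) else 0) =
      (if x = a then 1 else 0) * (if y = b then 1 else 0) +
        (if x = b then 1 else 0) * (if y = a then 1 else 0) := by
  by_cases hxa : x = a <;> by_cases hyb : y = b <;> by_cases hxb : x = b <;>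
    by_cases hya : y = a <;> simp_all

lemma edgeIndicator_alternating_sum {v v' u₁ u₂ : V} {S : Finset V} (e : Sym2 V)
    (hvv' : v ≠ v') (hvu₁ : v ≠ u₁) (hvu₂ : v ≠ u₂) (hv'u₁ : v' ≠ u₁) (hv'u₂ : v' ≠ u₂)
    (hv : v ∉ S) (hv' : v' ∉ S) (hu₁ : u₁ ∉ S) (hu₂ : u₂ ∉ S) :
    edgeIndicator e (insert v (insert u₁ S)) + edgeIndicator e (insert v' (insert u₂ S))
        - edgeIndicator e (insert v (insert u₂ S)) - edgeIndicator e (insert v' (insert u₁ S)) =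
      (if e = s(v, u₁) ∨ e = s(v', u₂) then 1 else 0)
        - (if e = s(v, u₂) ∨ e = s(v', u₁) then 1 else 0) := by
  -- Writing `[z ∈ insert a (insert b S)] = [z = a] + [z = b] + [z ∈ S]`, the alternating sum
  -- over `(a, b) ∈ {v, v'} × {u₁, u₂}` kills every term that does not involve both `a` and `b`.
  induction e using Sym2.ind with
  | _ x y =>
  have hprod : ∀ K, edgeIndicator s(x, y) K =
      (if x ∈ K then (1 : ℝ) else 0) * (if y ∈ K then 1 else 0) := fun K => by
    by_cases hx : x ∈ K <;> by_cases hy : y ∈ K <;> simp [edgeIndicator, hx, hy]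
  have hne₁ : s(v, u₁) ≠ s(v', u₂) := by simp [hvv', hvu₂]
  have hne₂ : s(v, u₂) ≠ s(v', u₁) := by simp [hvv', hvu₁]
  rw [ite_or_eq_add fun h => hne₁ (h.1.symm.trans h.2),
    ite_or_eq_add fun h => hne₂ (h.1.symm.trans h.2)]
  simp only [hprod, indicator_mem_insert_insert hvu₁ hv hu₁,
    indicator_mem_insert_insert hvu₂ hv hu₂, indicator_mem_insert_insert hv'u₁ hv' hu₁,
    indicator_mem_insert_insert hv'u₂ hv' hu₂,
    indicator_sym2_eq hvu₁, indicator_sym2_eq hvu₂, indicator_sym2_eq hv'u₁,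
    indicator_sym2_eq hv'u₂]
  ring

end CycleGadget

namespace SimpleGraph

variable {V : Type*} [Fintype V] {r : ℕ} (G : SimpleGraph V) (P : V → Fin r)

def nonNeighborsIn (x : V) (ℓ : Fin r) : Finset V :=
  {y | P y = ℓ ∧ ¬ G.Adj x y}

variable {G P}

lemma card_adj_add_card_nonNeighborsIn (x : V) (ℓ : Fin r) :
    #{y | P y = ℓ ∧ G.Adj x y} + #(G.nonNeighborsIn P x ℓ) = #{y | P y = ℓ} := by
  rw [← card_filter_add_card_filter_not (s := {y | P y = ℓ}) (G.Adj x), nonNeighborsIn,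
    filter_filter, filter_filter]

lemma card_nonNeighborsIn_le {n : ℕ} {ε : ℝ} (hsize : ∀ ℓ : Fin r, #{v | P v = ℓ} = n)
    (hdeg : ∀ ℓ x, P x ≠ ℓ → (1 - ε) * n ≤ #{y | P y = ℓ ∧ G.Adj x y}) (ℓ : Fin r) (x : V)
    (hx : P x ≠ ℓ) : (#(G.nonNeighborsIn P x ℓ) : ℝ) ≤ ε * n := by
  have h := card_adj_add_card_nonNeighborsIn (G := G) (P := P) x ℓ
  rw [hsize] at h
  have h' : (#{y | P y = ℓ ∧ G.Adj x y} : ℝ) + #(G.nonNeighborsIn P x ℓ) = n := by exact_mod_cast h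
  linarith [hdeg ℓ x hx]

lemma cast_card_le_of_fin (L : Finset (Fin r)) : (#L : ℝ) ≤ r := by
  exact_mod_cast (card_le_univ L).trans (Fintype.card_fin r).le

variable (G P) [DecidableEq V]

def transversalCliques (L : Finset (Fin r)) : Finset (Finset V) :=
  (G.cliqueFinset #L).filter fun S => S.image P = L

def commonNeighborsIn (S : Finset V) (ℓ : Fin r) : Finset V :=
  {w | P w = ℓ ∧ ∀ a ∈ S, G.Adj w a}

def transversalCliquesAdjTo (X : Finset V) (L : Finset (Fin r)) : Finset (Finset V) :=
  (G.transversalCliques P L).filter fun S => ∀ x ∈ X, ∀ a ∈ S, G.Adj x a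

variable {G P} {L : Finset (Fin r)} {S S' : Finset V} {w w' : V}

lemma mem_transversalCliques :
    S ∈ G.transversalCliques P L ↔ G.IsNClique #L S ∧ S.image P = L := by
  simp [transversalCliques]

lemma injOn_of_mem_transversalCliques (hS : S ∈ G.transversalCliques P L) : Set.InjOn P S := by
  rw [mem_transversalCliques] at hS
  rw [← card_image_iff, hS.2, hS.1.card_eq]

lemma mem_of_mem_transversalCliques (hS : S ∈ G.transversalCliques P L) (ha : w ∈ S) :
    P w ∈ L :=
  (mem_transversalCliques.1 hS).2 ▸ mem_image_of_mem P ha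

lemma notMem_of_mem_transversalCliques (hS : S ∈ G.transversalCliques P L) (hw : P w ∉ L) :
    w ∉ S :=
  fun h => hw (mem_of_mem_transversalCliques hS h)

lemma transversalCliques_empty : G.transversalCliques P ∅ = {∅} := by
  ext S
  simp [mem_transversalCliques, isNClique_zero]

lemma insert_mem_transversalCliques (hS : S ∈ G.transversalCliques P L) (hw : P w ∉ L)
    (hadj : ∀ a ∈ S, G.Adj w a) : insert w S ∈ G.transversalCliques P (insert (P w) L) := by
  obtain ⟨hcl, him⟩ := mem_transversalCliques.1 hS
  rw [mem_transversalCliques, card_insert_of_notMem hw, image_insert, him]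
  exact ⟨hcl.insert hadj, rfl⟩

lemma erase_mem_transversalCliques (hS : S ∈ G.transversalCliques P L) (hw : w ∈ S) :
    S.erase w ∈ G.transversalCliques P (L.erase (P w)) := by
  have hinj := injOn_of_mem_transversalCliques hS
  obtain ⟨hcl, him⟩ := mem_transversalCliques.1 hS
  have himage : (S.erase w).image P = L.erase (P w) := by
    ext b
    simp only [mem_image, mem_erase, ← him]
    constructor
    · rintro ⟨a, ⟨haw, ha⟩, rfl⟩
      exact ⟨fun h => haw (hinj ha hw h), a, ha, rfl⟩
    · rintro ⟨hbw, a, ha, rfl⟩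
      exact ⟨a, ⟨fun h => hbw (h ▸ rfl), ha⟩, rfl⟩
  rw [mem_transversalCliques, himage, card_erase_of_mem (mem_of_mem_transversalCliques hS hw)]
  exact ⟨hcl.erase_of_mem hw, rfl⟩

lemma eq_of_insert_eq_insert (hS : S ∈ G.transversalCliques P L)
    (hS' : S' ∈ G.transversalCliques P L) (hw : P w ∉ L) (hw' : P w' = P w)
    (h : insert w S = insert w' S') : w = w' ∧ S = S' := by
  have hwS' : w ∉ S' := notMem_of_mem_transversalCliques hS' hw
  have hwS : w ∉ S := notMem_of_mem_transversalCliques hS hw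
  have hww' : w = w' := by
    have : w ∈ insert w' S' := h ▸ mem_insert_self w S
    exact (mem_insert.1 this).resolve_right hwS'
  subst hww'
  refine ⟨rfl, ?_⟩
  rw [← erase_insert hwS, h, erase_insert hwS']

lemma transversalCliques_insert {ℓ : Fin r} (hℓ : ℓ ∉ L) :
    G.transversalCliques P (insert ℓ L) =
      (G.transversalCliques P L).biUnion
        fun S => (G.commonNeighborsIn P S ℓ).image (insert · S) := by
  ext K
  simp only [mem_biUnion, mem_image, commonNeighborsIn, mem_filter, mem_univ, true_and]
  constructor
  · intro hK
    obtain ⟨w, hwK, hw⟩ := mem_image.1 ((mem_transversalCliques.1 hK).2 ▸ mem_insert_self ℓ L)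
    have hcl := (mem_transversalCliques.1 hK).1.isClique
    refine ⟨K.erase w, ?_, w, ⟨hw, fun a ha => ?_⟩, insert_erase hwK⟩
    · simpa [hw, erase_insert hℓ] using erase_mem_transversalCliques hK hwK
    · exact hcl hwK (mem_of_mem_erase ha) (ne_of_mem_erase ha).symm
  · rintro ⟨S, hS, w, ⟨rfl, hadj⟩, rfl⟩
    exact insert_mem_transversalCliques hS hℓ hadj

lemma card_transversalCliques_insert {ℓ : Fin r} (hℓ : ℓ ∉ L) :
    #(G.transversalCliques P (insert ℓ L)) =
      ∑ S ∈ G.transversalCliques P L, #(G.commonNeighborsIn P S ℓ) := by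
  have hP : ∀ S, ∀ w ∈ G.commonNeighborsIn P S ℓ, P w = ℓ := fun S w hw => by
    simp only [commonNeighborsIn, mem_filter] at hw
    exact hw.2.1
  rw [transversalCliques_insert hℓ, card_biUnion]
  · refine sum_congr rfl fun S hS => card_image_of_injOn fun w hw w' hw' h => ?_
    exact (eq_of_insert_eq_insert hS hS (hP S w hw ▸ hℓ) ((hP S w' hw').trans (hP S w hw).symm) h).1
  · intro S hS S' hS' hne
    refine Finset.disjoint_left.2 fun K hK hK' => hne ?_
    obtain ⟨w, hw, rfl⟩ := mem_image.1 hK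
    obtain ⟨w', hw', h⟩ := mem_image.1 hK'
    exact (eq_of_insert_eq_insert hS hS' (hP S w hw ▸ hℓ)
      ((hP S' w' hw').trans (hP S w hw).symm) h.symm).2

lemma commonNeighborsIn_subset (ℓ : Fin r) :
    G.commonNeighborsIn P S ℓ ⊆ ({v | P v = ℓ} : Finset V) :=
  fun w hw => by simp only [commonNeighborsIn, mem_filter] at hw ⊢; exact ⟨hw.1, hw.2.1⟩

lemma card_commonNeighborsIn_ge {n : ℕ} {δ : ℝ} (hsize : ∀ ℓ : Fin r, #{v | P v = ℓ} = n)
    (hδ : ∀ ℓ x, P x ≠ ℓ → (#(G.nonNeighborsIn P x ℓ) : ℝ) ≤ δ) {ℓ : Fin r}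
    (hS : S ∈ G.transversalCliques P L) (hℓ : ℓ ∉ L) :
    (n : ℝ) - #L * δ ≤ #(G.commonNeighborsIn P S ℓ) := by
  set E := G.commonNeighborsIn P S ℓ
  have hmissing : ({v | P v = ℓ} : Finset V) \ E ⊆ S.biUnion (G.nonNeighborsIn P · ℓ) := by
    intro z hz
    simp only [E, commonNeighborsIn, mem_sdiff, mem_filter, mem_univ, true_and, not_and,
      not_forall] at hz
    obtain ⟨a, ha, hza⟩ := hz.2 hz.1
    exact mem_biUnion.2 ⟨a, ha, by simpa [nonNeighborsIn, hz.1] using fun h => hza h.symm⟩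
  have hcount : #(({v | P v = ℓ} : Finset V) \ E) + #E = n := by
    rw [card_sdiff_add_card_eq_card (commonNeighborsIn_subset ℓ), hsize]
  have hsum : (∑ a ∈ S, (#(G.nonNeighborsIn P a ℓ) : ℝ)) ≤ #L * δ := by
    rw [← (mem_transversalCliques.1 hS).1.card_eq, ← nsmul_eq_mul, ← sum_const]
    exact sum_le_sum fun a ha =>
      hδ ℓ a fun h => hℓ (h ▸ mem_of_mem_transversalCliques hS ha)
  have hmissing' : (#(({v | P v = ℓ} : Finset V) \ E) : ℝ) ≤
      ∑ a ∈ S, (#(G.nonNeighborsIn P a ℓ) : ℝ) := by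
    exact_mod_cast (card_le_card hmissing).trans card_biUnion_le
  have : (n : ℝ) = #(({v | P v = ℓ} : Finset V) \ E) + #E := by exact_mod_cast hcount.symm
  linarith

lemma card_transversalCliques_insert_le {n : ℕ} (hsize : ∀ ℓ : Fin r, #{v | P v = ℓ} = n)
    {ℓ : Fin r} (hℓ : ℓ ∉ L) :
    #(G.transversalCliques P (insert ℓ L)) ≤ n * #(G.transversalCliques P L) := by
  rw [card_transversalCliques_insert hℓ, mul_comm, ← smul_eq_mul, ← sum_const]
  exact sum_le_sum fun S _ => hsize ℓ ▸ card_le_card (commonNeighborsIn_subset ℓ)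

lemma card_transversalCliques_insert_ge {n : ℕ} {δ : ℝ}
    (hsize : ∀ ℓ : Fin r, #{v | P v = ℓ} = n)
    (hδ : ∀ ℓ x, P x ≠ ℓ → (#(G.nonNeighborsIn P x ℓ) : ℝ) ≤ δ) {ℓ : Fin r} (hℓ : ℓ ∉ L) :
    ((n : ℝ) - #L * δ) * #(G.transversalCliques P L) ≤ #(G.transversalCliques P (insert ℓ L)) := by
  rw [card_transversalCliques_insert hℓ, mul_comm, ← nsmul_eq_mul, ← sum_const, Nat.cast_sum]
  exact sum_le_sum fun S hS => card_commonNeighborsIn_ge hsize hδ hS hℓ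

lemma card_transversalCliques_erase_le {n : ℕ} {δ : ℝ}
    (hsize : ∀ ℓ : Fin r, #{v | P v = ℓ} = n)
    (hδ : ∀ ℓ x, P x ≠ ℓ → (#(G.nonNeighborsIn P x ℓ) : ℝ) ≤ δ) (hδ0 : 0 ≤ δ) {ℓ : Fin r}
    (hℓ : ℓ ∈ L) :
    ((n : ℝ) - r * δ) * #(G.transversalCliques P (L.erase ℓ)) ≤ #(G.transversalCliques P L) := by
  calc ((n : ℝ) - r * δ) * #(G.transversalCliques P (L.erase ℓ))
      ≤ ((n : ℝ) - #(L.erase ℓ) * δ) * #(G.transversalCliques P (L.erase ℓ)) := by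
        gcongr; exact_mod_cast cast_card_le_of_fin _
    _ ≤ #(G.transversalCliques P L) := by
        simpa [insert_erase hℓ] using card_transversalCliques_insert_ge hsize hδ (notMem_erase ℓ L)

lemma card_transversalCliques_pos {n : ℕ} {δ : ℝ}
    (hsize : ∀ ℓ : Fin r, #{v | P v = ℓ} = n)
    (hδ : ∀ ℓ x, P x ≠ ℓ → (#(G.nonNeighborsIn P x ℓ) : ℝ) ≤ δ) (hδ0 : 0 ≤ δ) (hrδ : r * δ < n)
    (L : Finset (Fin r)) : 0 < #(G.transversalCliques P L) := by
  induction L using Finset.induction_on with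
  | empty => simp [transversalCliques_empty]
  | insert ℓ L hℓ ih =>
    have h := card_transversalCliques_erase_le hsize hδ hδ0 (mem_insert_self ℓ L)
    rw [erase_insert hℓ] at h
    have : (0 : ℝ) < #(G.transversalCliques P (insert ℓ L)) :=
      (mul_pos (sub_pos.2 hrδ) (by exact_mod_cast ih)).trans_le h
    exact_mod_cast this

lemma card_filter_mem_transversalCliques_le (w : V) :
    #{S ∈ G.transversalCliques P L | w ∈ S} ≤ #(G.transversalCliques P (L.erase (P w))) := by
  refine card_le_card_of_injOn (·.erase w) (fun S hS => ?_) fun S hS S' hS' h => ?_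
  · obtain ⟨hS, hwS⟩ := mem_filter.1 hS
    exact erase_mem_transversalCliques hS hwS
  · simp only [mem_coe, mem_filter] at hS hS'
    rw [← insert_erase hS.2, ← insert_erase hS'.2]
    exact congrArg (insert w) h

lemma card_sub_card_transversalCliquesAdjTo_le {δ : ℝ}
    (hδ : ∀ ℓ x, P x ≠ ℓ → (#(G.nonNeighborsIn P x ℓ) : ℝ) ≤ δ) {X : Finset V}
    (hX : ∀ x ∈ X, P x ∉ L) :
    (#(G.transversalCliques P L) : ℝ) - #(G.transversalCliquesAdjTo P X L) ≤
      #X * δ * ∑ ℓ ∈ L, (#(G.transversalCliques P (L.erase ℓ)) : ℝ) := by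
  set T := G.transversalCliques P L
  have hbad : T \ G.transversalCliquesAdjTo P X L ⊆ X.biUnion fun x => L.biUnion fun ℓ =>
      (G.nonNeighborsIn P x ℓ).biUnion fun w => {S ∈ T | w ∈ S} := by
    intro S hS
    simp only [transversalCliquesAdjTo, mem_sdiff, mem_filter, not_and, not_forall] at hS
    obtain ⟨x, hx, a, ha, hxa⟩ := hS.2 hS.1
    simp only [mem_biUnion, mem_filter]
    exact ⟨x, hx, P a, mem_of_mem_transversalCliques hS.1 ha, a,
      by simp [nonNeighborsIn, hxa], hS.1, ha⟩
  have hcount : #(T \ G.transversalCliquesAdjTo P X L) ≤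
      ∑ x ∈ X, ∑ ℓ ∈ L, #(G.nonNeighborsIn P x ℓ) * #(G.transversalCliques P (L.erase ℓ)) := by
    refine (card_le_card hbad).trans <| card_biUnion_le.trans <| sum_le_sum fun x _ =>
      card_biUnion_le.trans <| sum_le_sum fun ℓ _ => card_biUnion_le.trans ?_
    rw [← smul_eq_mul, ← sum_const]
    refine sum_le_sum fun w hw => ?_
    have hw : P w = ℓ := by simp only [nonNeighborsIn, mem_filter] at hw; exact hw.2.1
    exact hw ▸ card_filter_mem_transversalCliques_le w
  have hsub : G.transversalCliquesAdjTo P X L ⊆ T := filter_subset _ _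
  rw [← Nat.cast_sub (card_le_card hsub), ← card_sdiff_of_subset hsub]
  calc (#(T \ G.transversalCliquesAdjTo P X L) : ℝ)
      ≤ ∑ x ∈ X, ∑ ℓ ∈ L,
          (#(G.nonNeighborsIn P x ℓ) : ℝ) * #(G.transversalCliques P (L.erase ℓ)) := by
        exact_mod_cast hcount
    _ ≤ ∑ x ∈ X, ∑ ℓ ∈ L, δ * #(G.transversalCliques P (L.erase ℓ)) := by
        gcongr with x hx ℓ hℓ
        exact hδ ℓ x fun h => hX x hx (h ▸ hℓ)
    _ = #X * δ * ∑ ℓ ∈ L, (#(G.transversalCliques P (L.erase ℓ)) : ℝ) := by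
        rw [sum_const, nsmul_eq_mul, ← mul_sum, mul_assoc]

lemma card_transversalCliques_le_card_transversalCliquesAdjTo {n : ℕ} {δ : ℝ}
    (hsize : ∀ ℓ : Fin r, #{v | P v = ℓ} = n)
    (hδ : ∀ ℓ x, P x ≠ ℓ → (#(G.nonNeighborsIn P x ℓ) : ℝ) ≤ δ) (hδ0 : 0 ≤ δ) (hrδ : r * δ ≤ n)
    {X : Finset V} (hX : ∀ x ∈ X, P x ∉ L) :
    ((n : ℝ) - r * δ - #X * r * δ) * #(G.transversalCliques P L) ≤
      ((n : ℝ) - r * δ) * #(G.transversalCliquesAdjTo P X L) := by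
  set c : ℝ := n - r * δ
  set T : ℝ := (#(G.transversalCliques P L) : ℝ)
  have hL : (#L : ℝ) ≤ r := cast_card_le_of_fin L
  have herase : ∑ ℓ ∈ L, c * #(G.transversalCliques P (L.erase ℓ)) ≤ #L * T := by
    rw [← nsmul_eq_mul, ← sum_const]
    exact sum_le_sum fun ℓ hℓ => card_transversalCliques_erase_le hsize hδ hδ0 hℓ
  have hbad : c * (T - #(G.transversalCliquesAdjTo P X L)) ≤
      #X * δ * ∑ ℓ ∈ L, c * #(G.transversalCliques P (L.erase ℓ)) := by
    rw [← mul_sum, mul_left_comm]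
    exact mul_le_mul_of_nonneg_left (card_sub_card_transversalCliquesAdjTo_le hδ hX)
      (sub_nonneg.2 hrδ)
  have hgood : #X * δ * ∑ ℓ ∈ L, c * #(G.transversalCliques P (L.erase ℓ)) ≤ #X * δ * (r * T) :=
    mul_le_mul_of_nonneg_left (herase.trans (by gcongr)) (by positivity)
  linarith

lemma univ_eq_insert_insert_sdiff (i j : Fin r) :
    (univ : Finset (Fin r)) = insert i (insert j (univ \ {i, j})) := by
  ext; simp only [mem_univ, mem_insert, mem_sdiff, mem_singleton, true_iff]; tauto

lemma cliqueFinset_eq_transversalCliques_univ (hpart : ∀ u v, G.Adj u v → P u ≠ P v) :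
    G.cliqueFinset r = G.transversalCliques P univ := by
  ext K
  rw [mem_transversalCliques, card_univ, Fintype.card_fin, mem_cliqueFinset_iff]
  refine ⟨fun hK => ⟨hK, eq_univ_of_card _ ?_⟩, And.left⟩
  have hinj : Set.InjOn P K := fun a ha b hb hab => by
    by_contra hne
    exact hpart a b (hK.isClique ha hb hne) hab
  rw [card_image_of_injOn hinj, hK.card_eq, Fintype.card_fin]

lemma card_cliqueFinset_le_mul_card_transversalCliques {n : ℕ}
    (hpart : ∀ u v, G.Adj u v → P u ≠ P v)
    (hsize : ∀ ℓ : Fin r, #{v | P v = ℓ} = n) {i j : Fin r} (hij : i ≠ j) :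
    #(G.cliqueFinset r) ≤ n * (n * #(G.transversalCliques P (univ \ {i, j}))) := by
  rw [cliqueFinset_eq_transversalCliques_univ hpart]
  nth_rewrite 1 [univ_eq_insert_insert_sdiff i j]
  exact (card_transversalCliques_insert_le hsize (by simp [hij])).trans
    (Nat.mul_le_mul_left n (card_transversalCliques_insert_le hsize (by simp)))

lemma card_cliqueFinset_le_two_mul_card_transversalCliquesAdjTo {n : ℕ}
    (hpart : ∀ u v, G.Adj u v → P u ≠ P v) (hsize : ∀ ℓ : Fin r, #{v | P v = ℓ} = n)
    (hdeg : ∀ ℓ x, P x ≠ ℓ → (1 - 1 / (16 * (r : ℝ))) * n ≤ #{y | P y = ℓ ∧ G.Adj x y})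
    (hn : 0 < n) {i j : Fin r} (hij : i ≠ j) {X : Finset V} (hX : #X ≤ 4)
    (hXij : ∀ x ∈ X, P x ∉ univ \ {i, j}) :
    (0 : ℝ) < #(G.transversalCliquesAdjTo P X (univ \ {i, j})) ∧
      (#(G.cliqueFinset r) : ℝ) ≤ 2 * n ^ 2 * #(G.transversalCliquesAdjTo P X (univ \ {i, j})) := by
  set δ : ℝ := 1 / (16 * r) * n
  have hr : (0 : ℝ) < r := by exact_mod_cast i.pos
  have hn' : (0 : ℝ) < n := by exact_mod_cast hn
  have hrδ : r * δ = n / 16 := by simp only [δ]; field_simp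
  have hδ := card_nonNeighborsIn_le hsize hdeg
  have hT : (0 : ℝ) < #(G.transversalCliques P (univ \ {i, j})) := by
    exact_mod_cast card_transversalCliques_pos hsize hδ (by positivity) (by linarith) _
  have hk : (#(G.cliqueFinset r) : ℝ) ≤ n * (n * #(G.transversalCliques P (univ \ {i, j}))) := by
    exact_mod_cast card_cliqueFinset_le_mul_card_transversalCliques hpart hsize hij
  have hTA := card_transversalCliques_le_card_transversalCliquesAdjTo hsize hδ (by positivity)
    (by linarith) hXij
  rw [hrδ, mul_assoc, hrδ] at hTA
  have hX' : (#X : ℝ) ≤ 4 := by exact_mod_cast hX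
  set T : ℝ := (#(G.transversalCliques P (univ \ {i, j})) : ℝ)
  set A : ℝ := (#(G.transversalCliquesAdjTo P X (univ \ {i, j})) : ℝ)
  -- Since `#X ≤ 4`, `hTA` gives `11 * T ≤ 15 * A`.
  have hTA' : T ≤ 2 * A := by
    nlinarith [mul_nonneg (mul_nonneg (sub_nonneg.2 hX') hn'.le) hT.le,
      mul_nonneg hn'.le (show (0 : ℝ) ≤ A by positivity)]
  exact ⟨by linarith, by nlinarith⟩

lemma insert_insert_mem_cliqueFinset (hpart : ∀ u v, G.Adj u v → P u ≠ P v) {i j : Fin r}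
    (hij : i ≠ j) {a b : V} (ha : P a = i) (hb : P b = j) (hab : G.Adj a b) {X : Finset V}
    (haX : a ∈ X) (hbX : b ∈ X) (hS : S ∈ G.transversalCliquesAdjTo P X (univ \ {i, j})) :
    insert a (insert b S) ∈ G.cliqueFinset r := by
  obtain ⟨hS, hadj⟩ := mem_filter.1 hS
  have hbS := insert_mem_transversalCliques hS (by simp [hb]) (hadj b hbX)
  have habS := insert_mem_transversalCliques (w := a) hbS (by simp [ha, hb, hij])
    (by simpa [hab] using hadj a haX)
  rwa [ha, hb, ← univ_eq_insert_insert_sdiff i j, ← cliqueFinset_eq_transversalCliques_univ hpart]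
    at habS

lemma injOn_insert_insert {i j : Fin r} (hij : i ≠ j) {a b : V} (ha : P a = i) (hb : P b = j) :
    Set.InjOn (fun S => insert a (insert b S))
      (G.transversalCliques P (univ \ {i, j}) : Set (Finset V)) := by
  have hab : a ≠ b := fun h => hij (ha ▸ hb ▸ congrArg P h)
  have herase : ∀ S ∈ G.transversalCliques P (univ \ {i, j}),
      ((insert a (insert b S)).erase a).erase b = S := fun S hS => by
    have haS := notMem_of_mem_transversalCliques hS (w := a) (by simp [ha])
    have hbS := notMem_of_mem_transversalCliques hS (w := b) (by simp [hb])
    rw [erase_insert (by simp [hab, haS]), erase_insert hbS]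
  intro S hS S' hS' h
  rw [← herase S hS, ← herase S' hS']
  exact congrArg (fun K => (K.erase a).erase b) h

lemma sum_cycleGadget_mul (hpart : ∀ u v, G.Adj u v → P u ≠ P v) {i j : Fin r} (hij : i ≠ j)
    {v v' u₁ u₂ : V} (hv : P v = i) (hv' : P v' = i) (hu₁ : P u₁ = j) (hu₂ : P u₂ = j)
    (h₁ : G.Adj v u₁) (h₂ : G.Adj v u₂) (h₃ : G.Adj v' u₁) (h₄ : G.Adj v' u₂) {X : Finset V}
    (hX : v ∈ X ∧ v' ∈ X ∧ u₁ ∈ X ∧ u₂ ∈ X) (h : Finset V → ℝ) :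
    ∑ K ∈ G.cliqueFinset r,
        cycleGadget (G.transversalCliquesAdjTo P X (univ \ {i, j})) v v' u₁ u₂ K * h K =
      (#(G.transversalCliquesAdjTo P X (univ \ {i, j})) : ℝ)⁻¹ *
        ∑ S ∈ G.transversalCliquesAdjTo P X (univ \ {i, j}),
          (h (insert v (insert u₁ S)) + h (insert v' (insert u₂ S))
            - h (insert v (insert u₂ S)) - h (insert v' (insert u₁ S))) := by
  have hlift : ∀ {a b}, P a = i → P b = j → G.Adj a b → a ∈ X → b ∈ X →
      ∑ K ∈ G.cliqueFinset r,
          liftIndicator (G.transversalCliquesAdjTo P X (univ \ {i, j})) a b K * h K =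
        ∑ S ∈ G.transversalCliquesAdjTo P X (univ \ {i, j}), h (insert a (insert b S)) :=
    fun ha hb hab haX hbX => sum_liftIndicator_mul
      ((injOn_insert_insert hij ha hb).mono (filter_subset _ _))
      (fun _ hS => insert_insert_mem_cliqueFinset hpart hij ha hb hab haX hbX hS) h
  simp only [cycleGadget, mul_assoc, ← mul_sum, add_mul, sub_mul, sum_add_distrib,
    sum_sub_distrib, hlift hv hu₁ h₁ hX.1 hX.2.2.1, hlift hv' hu₂ h₄ hX.2.1 hX.2.2.2,
    hlift hv hu₂ h₂ hX.1 hX.2.2.2, hlift hv' hu₁ h₃ hX.2.1 hX.2.2.1]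

lemma edgeIndicator_alternating_sum_of_mem {i j : Fin r} (hij : i ≠ j) {v v' u₁ u₂ : V}
    (hv : P v = i) (hv' : P v' = i) (hu₁ : P u₁ = j) (hu₂ : P u₂ = j) (hvv' : v ≠ v')
    (hS : S ∈ G.transversalCliques P (univ \ {i, j})) (e : Sym2 V) :
    edgeIndicator e (insert v (insert u₁ S)) + edgeIndicator e (insert v' (insert u₂ S))
        - edgeIndicator e (insert v (insert u₂ S)) - edgeIndicator e (insert v' (insert u₁ S)) =
      (if e = s(v, u₁) ∨ e = s(v', u₂) then 1 else 0)
        - (if e = s(v, u₂) ∨ e = s(v', u₁) then 1 else 0) := by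
  have hne : ∀ {a b}, P a = i → P b = j → a ≠ b := fun ha hb h => hij (ha ▸ hb ▸ congrArg P h)
  have hnotMem : ∀ {a}, P a = i ∨ P a = j → a ∉ S := fun ha =>
    notMem_of_mem_transversalCliques hS (by rcases ha with h | h <;> simp [h])
  exact edgeIndicator_alternating_sum e hvv' (hne hv hu₁) (hne hv hu₂) (hne hv' hu₁)
    (hne hv' hu₂) (hnotMem (.inl hv)) (hnotMem (.inl hv')) (hnotMem (.inr hu₁))
    (hnotMem (.inr hu₂))

end SimpleGraph

end

theorem stmt_4_general {V : Type*} [Fintype V] [DecidableEq V] {r n : ℕ}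
    (G : SimpleGraph V) (P : V → Fin r)
    (hpart : ∀ u v, G.Adj u v → P u ≠ P v)
    (hsize : ∀ i : Fin r, (Finset.univ.filter fun v => P v = i).card = n)
    (hdeg : ∀ (ℓ : Fin r) (x : V), P x ≠ ℓ →
      (1 - 1 / (16 * (r : ℝ))) * n ≤
        ((Finset.univ.filter fun y => P y = ℓ ∧ G.Adj x y).card : ℝ))
    (i j : Fin r) (hij : i ≠ j)
    (v v' : V) (hv : P v = i) (hv' : P v' = i) (hvv' : v ≠ v')
    (u₁ u₂ : V) (hu₁ : P u₁ = j) (hu₂ : P u₂ = j)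
    (h1 : G.Adj v u₁) (h2 : G.Adj v u₂) (h3 : G.Adj v' u₁) (h4 : G.Adj v' u₂) :
    ∃ ψ : Finset V → ℝ,
      (∑ K ∈ G.cliqueFinset r, ψ K = 0) ∧
      (∀ e ∈ G.edgeFinset,
        ∑ K ∈ (G.cliqueFinset r).filter (fun K => ∀ x ∈ e, x ∈ K), ψ K =
          (if e = s(v, u₁) ∨ e = s(v', u₂) then (1 : ℝ) else 0)
            - (if e = s(v, u₂) ∨ e = s(v', u₁) then (1 : ℝ) else 0)) ∧
      (∀ K ∈ G.cliqueFinset r,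
        |ψ K| ≤ 2 * (n : ℝ) ^ 2 / ((G.cliqueFinset r).card : ℝ)) := by
  set X : Finset V := {v, v', u₁, u₂}
  set M := G.transversalCliquesAdjTo P X (univ \ {i, j})
  have hXij : ∀ x ∈ X, P x ∉ univ \ {i, j} := by
    simp only [X, mem_insert, mem_singleton]
    rintro x (rfl | rfl | rfl | rfl) <;> simp [*]
  obtain ⟨hM, hk⟩ := G.card_cliqueFinset_le_two_mul_card_transversalCliquesAdjTo hpart hsize hdeg
    (hsize i ▸ card_pos.2 ⟨v, by simp [hv]⟩) hij card_le_four hXij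
  have hsum := G.sum_cycleGadget_mul hpart hij hv hv' hu₁ hu₂ h1 h2 h3 h4 (X := X) (by simp [X])
  refine ⟨cycleGadget M v v' u₁ u₂, by simpa using hsum fun _ => 1, fun e _ => ?_, fun K hK => ?_⟩
  · rw [sum_filter, sum_congr rfl fun K _ => ite_forall_mem_eq_mul_edgeIndicator e K _, hsum,
      sum_congr rfl fun S (hS : S ∈ M) => SimpleGraph.edgeIndicator_alternating_sum_of_mem hij
        hv hv' hu₁ hu₂ hvv' (filter_subset _ _ hS) e,
      sum_const, nsmul_eq_mul, inv_mul_cancel_left₀ hM.ne']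
  · have hvv'K : ¬(v ∈ K ∧ v' ∈ K) := fun h =>
      hpart v v' ((G.mem_cliqueFinset_iff.1 hK).isClique h.1 h.2 hvv') (hv.trans hv'.symm)
    have hk0 : (0 : ℝ) < #(G.cliqueFinset r) := by exact_mod_cast card_pos.2 ⟨K, hK⟩
    refine (abs_cycleGadget_le hvv'K).trans ?_
    rw [inv_eq_one_div, div_le_div_iff₀ hM hk0, one_mul]
    exact hk

/-- the second gadget, with the bound |ψ(K)| ≤ 2n²/k. -/
theorem stmt_4 {V : Type*} [Fintype V] [DecidableEq V] {r n : ℕ} (hr : 3 ≤ r)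
    (hn : 16 * r ≤ n)
    (G : SimpleGraph V) (P : V → Fin r)
    (hpart : ∀ u v, G.Adj u v → P u ≠ P v)
    (hsize : ∀ i : Fin r, (Finset.univ.filter fun v => P v = i).card = n)
    (hdeg : ∀ (ℓ : Fin r) (x : V), P x ≠ ℓ →
      (1 - 1 / (16 * (r : ℝ))) * n ≤
        ((Finset.univ.filter fun y => P y = ℓ ∧ G.Adj x y).card : ℝ))
    (i j : Fin r) (hij : i ≠ j)
    (v v' : V) (hv : P v = i) (hv' : P v' = i) (hvv' : v ≠ v')
    (u₁ u₂ : V) (hu₁ : P u₁ = j) (hu₂ : P u₂ = j) (hu12 : u₁ ≠ u₂)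
    (h1 : G.Adj v u₁) (h2 : G.Adj v u₂) (h3 : G.Adj v' u₁) (h4 : G.Adj v' u₂) :
    ∃ ψ : Finset V → ℝ,
      (∑ K ∈ G.cliqueFinset r, ψ K = 0) ∧
      (∀ e ∈ G.edgeFinset,
        ∑ K ∈ (G.cliqueFinset r).filter (fun K => ∀ x ∈ e, x ∈ K), ψ K =
          (if e = s(v, u₁) ∨ e = s(v', u₂) then (1 : ℝ) else 0)
            - (if e = s(v, u₂) ∨ e = s(v', u₁) then (1 : ℝ) else 0)) ∧
      (∀ K ∈ G.cliqueFinset r,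
        |ψ K| ≤ 2 * (n : ℝ) ^ 2 / ((G.cliqueFinset r).card : ℝ)) :=
  stmt_4_general G P hpart hsize hdeg i j hij v v' hv hv' hvv' u₁ u₂ hu₁ hu₂ h1 h2 h3 h4
end

section
/- Let r ≥ 3, let G be an r-partite graph on (V_1,...,V_r) with parts of size n, let j ∈ [r], v ∈ V_j, z ∈ ℝ, and suppose reals z_{vu} are given for u ∈ N(v) with Σ_{u ∈ V_i ∩ N(v)} z_{vu} = z for every i ≠ j. Then there exist a finite set A of pairs (A, a), where A ⊆ N(v) meets each V_i (i ≠ j) in exactly one vertex and a ∈ ℝ, and a finite set B of triples (u_1, u_2, b) with u_1, u_2 ∈ V_i ∩ N(v) for some i ≠ j and b > 0, such that: (i) for each (A, a) ∈ A and u ∈ A, sgn(z_{vu}) = sgn(a); (ii) for each (u_1,u_2,b) ∈ B, z_{v u_1} > 0 and z_{v u_2} < 0; (iii) for every u ∈ N(v), z_{vu} = Σ_{(A,a) ∈ A} a·1[u ∈ A] + Σ_{(u_1,u_2,b) ∈ B} b·(1[u = u_1] − 1[u = u_2]). -/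
open Finset
open scoped Classical

section Aux

variable {V : Type*} [Fintype V] [DecidableEq V] {r : ℕ}

private lemma sign_mono_eq {a b : ℝ} (h1 : 0 < b → 0 < a) (h2 : b < 0 → a < 0)
    (hb : b ≠ 0) : Real.sign a = Real.sign b := by
  rcases hb.lt_or_gt with h | h
  · rw [Real.sign_of_neg h, Real.sign_of_neg (h2 h)]
  · rw [Real.sign_of_pos h, Real.sign_of_pos (h1 h)]

/-- The strengthened conclusion (with `a k ≠ 0`). -/
def GoodDec (G : SimpleGraph V) (P : V → Fin r) (j : Fin r) (v : V) (zf : V → ℝ) : Prop :=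
  ∃ (s t : ℕ) (A : Fin s → Finset V) (a : Fin s → ℝ)
    (u₁ u₂ : Fin t → V) (b : Fin t → ℝ),
    (∀ k : Fin s, (∀ x ∈ A k, G.Adj v x) ∧ (A k).card = r - 1 ∧
      ∀ i : Fin r, i ≠ j → ((A k).filter fun x => P x = i).card = 1) ∧
    (∀ k : Fin s, a k ≠ 0 ∧ ∀ x ∈ A k, Real.sign (zf x) = Real.sign (a k)) ∧
    (∀ l : Fin t, P (u₁ l) = P (u₂ l) ∧ P (u₁ l) ≠ j ∧
      G.Adj v (u₁ l) ∧ G.Adj v (u₂ l) ∧ 0 < b l ∧ 0 < zf (u₁ l) ∧ zf (u₂ l) < 0) ∧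
    (∀ x, G.Adj v x →
      zf x = (∑ k : Fin s, a k * (if x ∈ A k then 1 else 0))
        + (∑ l : Fin t, b l * ((if x = u₁ l then 1 else 0) - (if x = u₂ l then 1 else 0))))

variable {G : SimpleGraph V} {P : V → Fin r} {j : Fin r} {v : V}

lemma good_zero {zf : V → ℝ} (h : ∀ x, G.Adj v x → zf x = 0) : GoodDec G P j v zf := by
  refine ⟨0, 0, finZeroElim, finZeroElim, finZeroElim, finZeroElim, finZeroElim,
    fun k => k.elim0, fun k => k.elim0, fun l => l.elim0, fun x hx => ?_⟩
  simp [h x hx]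

lemma good_neg {zf : V → ℝ} (h : GoodDec G P j v (fun x => -zf x)) : GoodDec G P j v zf := by
  obtain ⟨s, t, A, a, u₁, u₂, b, h1, h2, h3, h4⟩ := h
  refine ⟨s, t, A, fun k => -(a k), u₂, u₁, b, h1, ?_, ?_, ?_⟩
  · intro k
    obtain ⟨hk, hk'⟩ := h2 k
    refine ⟨neg_ne_zero.2 hk, fun x hx => ?_⟩
    have hs := hk' x hx
    rw [Real.sign_neg] at hs
    rw [Real.sign_neg]
    linarith
  · intro l
    obtain ⟨e1, e2, e3, e4, e5, e6, e7⟩ := h3 l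
    have e6' : 0 < -zf (u₁ l) := e6
    have e7' : -zf (u₂ l) < 0 := e7
    exact ⟨e1.symm, by rw [← e1]; exact e2, e4, e3, e5, by linarith, by linarith⟩
  · intro x hx
    have h4x := h4 x hx
    have : zf x = -((∑ k : Fin s, a k * (if x ∈ A k then 1 else 0))
        + (∑ l : Fin t, b l * ((if x = u₁ l then 1 else 0) - (if x = u₂ l then 1 else 0)))) := by
      rw [← h4x]; ring
    rw [this, neg_add, ← Finset.sum_neg_distrib, ← Finset.sum_neg_distrib]
    congr 1
    · exact Finset.sum_congr rfl fun k _ => by ring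
    · exact Finset.sum_congr rfl fun l _ => by ring

lemma good_pair {zf zf' : V → ℝ} {w₁ w₂ : V} {c : ℝ}
    (hP : P w₁ = P w₂) (hPj : P w₁ ≠ j) (ha1 : G.Adj v w₁) (ha2 : G.Adj v w₂)
    (hc : 0 < c) (hp : 0 < zf w₁) (hn : zf w₂ < 0)
    (heq : ∀ x, G.Adj v x →
      zf x = zf' x + c * ((if x = w₁ then 1 else 0) - (if x = w₂ then 1 else 0)))
    (hmono : ∀ x, (0 < zf' x → 0 < zf x) ∧ (zf' x < 0 → zf x < 0))
    (h : GoodDec G P j v zf') : GoodDec G P j v zf := by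
  obtain ⟨s, t, A, a, u₁, u₂, b, h1, h2, h3, h4⟩ := h
  refine ⟨s, t + 1, A, a, Fin.cons w₁ u₁, Fin.cons w₂ u₂, Fin.cons c b, h1, ?_, ?_, ?_⟩
  · intro k
    obtain ⟨hk, hk'⟩ := h2 k
    refine ⟨hk, fun x hx => ?_⟩
    have hs := hk' x hx
    have hne : zf' x ≠ 0 := by
      intro h0
      rw [h0, Real.sign_zero] at hs
      exact hk (Real.sign_eq_zero_iff.1 hs.symm)
    rw [← hs]
    exact sign_mono_eq (hmono x).1 (hmono x).2 hne
  · intro l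
    refine Fin.cases ?_ ?_ l
    · simpa using ⟨hP, hPj, ha1, ha2, hc, hp, hn⟩
    · intro l'
      simp only [Fin.cons_succ]
      obtain ⟨e1, e2, e3, e4, e5, e6, e7⟩ := h3 l'
      exact ⟨e1, e2, e3, e4, e5, (hmono _).1 e6, (hmono _).2 e7⟩
  · intro x hx
    rw [heq x hx, h4 x hx, Fin.sum_univ_succ]
    simp only [Fin.cons_zero, Fin.cons_succ]
    ring

lemma good_trans {zf zf' : V → ℝ} {W : Finset V} {α : ℝ} (hα : α ≠ 0)
    (hWadj : ∀ x ∈ W, G.Adj v x) (hWcard : W.card = r - 1)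
    (hWfil : ∀ i : Fin r, i ≠ j → (W.filter fun x => P x = i).card = 1)
    (hsgn : ∀ x ∈ W, Real.sign (zf x) = Real.sign α)
    (heq : ∀ x, G.Adj v x → zf x = zf' x + α * (if x ∈ W then 1 else 0))
    (hmono : ∀ x, (0 < zf' x → 0 < zf x) ∧ (zf' x < 0 → zf x < 0))
    (h : GoodDec G P j v zf') : GoodDec G P j v zf := by
  obtain ⟨s, t, A, a, u₁, u₂, b, h1, h2, h3, h4⟩ := h
  refine ⟨s + 1, t, Fin.cons W A, Fin.cons α a, u₁, u₂, b, ?_, ?_, ?_, ?_⟩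
  · intro k
    refine Fin.cases ?_ ?_ k
    · simpa using ⟨hWadj, hWcard, hWfil⟩
    · intro k'; simpa using h1 k'
  · intro k
    refine Fin.cases ?_ ?_ k
    · simpa using ⟨hα, hsgn⟩
    · intro k'
      simp only [Fin.cons_succ]
      obtain ⟨hk, hk'⟩ := h2 k'
      refine ⟨hk, fun x hx => ?_⟩
      have hs := hk' x hx
      have hne : zf' x ≠ 0 := by
        intro h0
        rw [h0, Real.sign_zero] at hs
        exact hk (Real.sign_eq_zero_iff.1 hs.symm)
      rw [← hs]
      exact sign_mono_eq (hmono x).1 (hmono x).2 hne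
  · intro l
    obtain ⟨e1, e2, e3, e4, e5, e6, e7⟩ := h3 l
    exact ⟨e1, e2, e3, e4, e5, (hmono _).1 e6, (hmono _).2 e7⟩
  · intro x hx
    rw [heq x hx, h4 x hx, Fin.sum_univ_succ]
    simp only [Fin.cons_zero, Fin.cons_succ]
    ring

/-- The "positive step": if all column sums are `z > 0` and no part contains both a
positive and a negative value, one can split off a transversal. -/
lemma pos_step (hr : 3 ≤ r) (hpart : ∀ u w, G.Adj u w → P u ≠ P w) (hv : P v = j)
    (zf : V → ℝ) (z : ℝ) (hzpos : 0 < z)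
    (hsum : ∀ i : Fin r, i ≠ j →
      ∑ u ∈ Finset.univ.filter (fun u => P u = i ∧ G.Adj v u), zf u = z)
    (hnomix : ¬ ∃ w₁ w₂, G.Adj v w₁ ∧ G.Adj v w₂ ∧ P w₁ = P w₂ ∧ P w₁ ≠ j ∧
      0 < zf w₁ ∧ zf w₂ < 0) :
    ∃ (W : Finset V) (α : ℝ) (x₀ : V), 0 < α ∧
      (∀ x ∈ W, G.Adj v x ∧ α ≤ zf x) ∧
      W.card = r - 1 ∧
      (∀ i : Fin r, i ≠ j → (W.filter fun x => P x = i).card = 1) ∧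
      (∀ i : Fin r, i ≠ j →
        ∑ u ∈ Finset.univ.filter (fun u => P u = i ∧ G.Adj v u),
          (zf u - α * (if u ∈ W then 1 else 0)) = z - α) ∧
      G.Adj v x₀ ∧ zf x₀ = α ∧ x₀ ∈ W := by
  have hT : ∀ i : Fin r, ∃ x, i ≠ j →
      (P x = i ∧ G.Adj v x) ∧ 0 < zf x ∧
      ∀ y ∈ Finset.univ.filter (fun u => P u = i ∧ G.Adj v u), zf y ≤ zf x := by
    intro i
    by_cases hi : i = j
    · exact ⟨v, fun h => absurd hi h⟩
    · have hsum_i := hsum i hi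
      have hne : (Finset.univ.filter (fun u => P u = i ∧ G.Adj v u)).Nonempty := by
        rw [Finset.nonempty_iff_ne_empty]
        intro h
        rw [h] at hsum_i
        simp at hsum_i
        linarith
      obtain ⟨x, hx, hmax⟩ := Finset.exists_max_image _ zf hne
      have hx' := Finset.mem_filter.1 hx
      refine ⟨x, fun _ => ⟨hx'.2, ?_, hmax⟩⟩
      obtain ⟨y, hy, hy'⟩ := Finset.exists_lt_of_sum_lt
        (f := fun _ => (0:ℝ)) (g := zf) (s := Finset.univ.filter (fun u => P u = i ∧ G.Adj v u))
        (by rw [hsum_i]; simpa using hzpos)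
      exact lt_of_lt_of_le hy' (hmax y hy)
  choose w hw using hT
  have hEne : (Finset.univ.erase j).Nonempty := by
    rw [← Finset.card_pos, Finset.card_erase_of_mem (Finset.mem_univ j)]
    simp only [Finset.card_univ, Fintype.card_fin]
    omega
  obtain ⟨i₀, hi₀, hmin⟩ := Finset.exists_min_image (Finset.univ.erase j) (fun i => zf (w i)) hEne
  have hi₀j : i₀ ≠ j := (Finset.mem_erase.1 hi₀).1
  set α := zf (w i₀) with hαdef
  set W := (Finset.univ.erase j).image w with hWdef
  have hwmem : ∀ i : Fin r, i ≠ j → P (w i) = i ∧ G.Adj v (w i) ∧ 0 < zf (w i) ∧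
      ∀ y ∈ Finset.univ.filter (fun u => P u = i ∧ G.Adj v u), zf y ≤ zf (w i) := by
    intro i hi
    obtain ⟨⟨hp, ha⟩, hpos, hmax⟩ := hw i hi
    exact ⟨hp, ha, hpos, hmax⟩
  have hα : 0 < α := (hwmem i₀ hi₀j).2.2.1
  have hWchar : ∀ {x}, x ∈ W → ∃ i, i ≠ j ∧ x = w i := by
    intro x hx
    obtain ⟨i, hi, rfl⟩ := Finset.mem_image.1 hx
    exact ⟨i, (Finset.mem_erase.1 hi).1, rfl⟩
  have hαle : ∀ x ∈ W, G.Adj v x ∧ α ≤ zf x := by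
    intro x hx
    obtain ⟨i, hi, rfl⟩ := hWchar hx
    exact ⟨(hwmem i hi).2.1, hmin i (Finset.mem_erase.2 ⟨hi, Finset.mem_univ i⟩)⟩
  have hWfil : ∀ i : Fin r, i ≠ j → W.filter (fun x => P x = i) = {w i} := by
    intro i hi
    ext x
    simp only [Finset.mem_filter, Finset.mem_singleton]
    constructor
    · rintro ⟨hxW, hPx⟩
      obtain ⟨i', hi', rfl⟩ := hWchar hxW
      rw [(hwmem i' hi').1] at hPx
      rw [hPx]
    · rintro rfl
      exact ⟨Finset.mem_image.2 ⟨i, Finset.mem_erase.2 ⟨hi, Finset.mem_univ i⟩, rfl⟩,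
        (hwmem i hi).1⟩
  refine ⟨W, α, w i₀, hα, hαle, ?_, ?_, ?_, (hwmem i₀ hi₀j).2.1, rfl, ?_⟩
  · rw [hWdef, Finset.card_image_of_injOn, Finset.card_erase_of_mem (Finset.mem_univ j)]
    · simp
    · intro i1 h1 i2 h2 he
      have e1 := (hwmem i1 (Finset.mem_erase.1 h1).1).1
      have e2 := (hwmem i2 (Finset.mem_erase.1 h2).1).1
      rw [← e1, ← e2, he]
  · intro i hi
    rw [hWfil i hi]
    simp
  · intro i hi
    rw [Finset.sum_sub_distrib, hsum i hi]
    have hTfil : (Finset.univ.filter (fun u => P u = i ∧ G.Adj v u)).filter (fun u => u ∈ W)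
        = {w i} := by
      ext x
      simp only [Finset.mem_filter, Finset.mem_singleton, Finset.mem_univ, true_and]
      constructor
      · rintro ⟨⟨hPx, _⟩, hxW⟩
        obtain ⟨i', hi', rfl⟩ := hWchar hxW
        have := (hwmem i' hi').1
        rw [this] at hPx
        rw [hPx]
      · rintro rfl
        exact ⟨⟨(hwmem i hi).1, (hwmem i hi).2.1⟩,
          Finset.mem_image.2 ⟨i, Finset.mem_erase.2 ⟨hi, Finset.mem_univ i⟩, rfl⟩⟩
    have : ∑ u ∈ Finset.univ.filter (fun u => P u = i ∧ G.Adj v u),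
        (α * (if u ∈ W then 1 else 0)) = α := by
      rw [← Finset.mul_sum, Finset.sum_boole, hTfil]
      simp
    rw [this]
  · exact Finset.mem_image.2 ⟨i₀, hi₀, rfl⟩

lemma aux_main (hr : 3 ≤ r) (hpart : ∀ u w, G.Adj u w → P u ≠ P w) (hv : P v = j) :
    ∀ (m : ℕ) (zf : V → ℝ) (z : ℝ),
      (Finset.univ.filter fun u => G.Adj v u ∧ zf u ≠ 0).card = m →
      (∀ i : Fin r, i ≠ j →
        ∑ u ∈ Finset.univ.filter (fun u => P u = i ∧ G.Adj v u), zf u = z) →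
      GoodDec G P j v zf := by
  intro m
  induction m using Nat.strong_induction_on with
  | _ m IH =>
  intro zf z hm hsum
  by_cases hmix : ∃ w₁ w₂, G.Adj v w₁ ∧ G.Adj v w₂ ∧ P w₁ = P w₂ ∧ P w₁ ≠ j ∧
      0 < zf w₁ ∧ zf w₂ < 0
  · -- balance a mixed pair
    obtain ⟨w₁, w₂, ha1, ha2, hPP, hPj, hp, hn⟩ := hmix
    have hne : w₁ ≠ w₂ := fun h => by rw [h] at hp; linarith
    set c := min (zf w₁) (-zf w₂) with hc
    have hc0 : 0 < c := lt_min hp (by linarith)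
    have hc1 : c ≤ zf w₁ := min_le_left _ _
    have hc2 : c ≤ -zf w₂ := min_le_right _ _
    set zf' := fun x => zf x - c * ((if x = w₁ then (1:ℝ) else 0) - (if x = w₂ then 1 else 0))
      with hzf'
    have hval1 : zf' w₁ = zf w₁ - c := by simp [hzf', hne]
    have hval2 : zf' w₂ = zf w₂ + c := by simp [hzf', hne.symm]
    have hvalo : ∀ x, x ≠ w₁ → x ≠ w₂ → zf' x = zf x := by
      intro x h1 h2; simp [hzf', h1, h2]
    have hmono : ∀ x, (0 < zf' x → 0 < zf x) ∧ (zf' x < 0 → zf x < 0) := by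
      intro x
      by_cases h1 : x = w₁
      · subst h1
        rw [hval1]
        constructor <;> intro <;> linarith
      by_cases h2 : x = w₂
      · subst h2
        rw [hval2]
        constructor <;> intro <;> linarith
      · rw [hvalo x h1 h2]; exact ⟨id, id⟩
    -- the element killed
    have hx₀ : ∃ x₀, G.Adj v x₀ ∧ zf x₀ ≠ 0 ∧ zf' x₀ = 0 := by
      rcases min_cases (zf w₁) (-zf w₂) with ⟨he, _⟩ | ⟨he, _⟩
      · exact ⟨w₁, ha1, by linarith, by rw [hval1, hc, he]; ring⟩
      · exact ⟨w₂, ha2, by linarith, by rw [hval2, hc, he]; ring⟩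
    obtain ⟨x₀, hx₀a, hx₀n, hx₀z⟩ := hx₀
    have hsub : (Finset.univ.filter fun u => G.Adj v u ∧ zf' u ≠ 0) ⊆
        (Finset.univ.filter fun u => G.Adj v u ∧ zf u ≠ 0).erase x₀ := by
      intro x hx
      obtain ⟨_, hxa, hxn⟩ := Finset.mem_filter.1 hx
      rw [Finset.mem_erase]
      refine ⟨fun h => hxn (h ▸ hx₀z), Finset.mem_filter.2 ⟨Finset.mem_univ x, hxa, ?_⟩⟩
      intro h0
      apply hxn
      by_cases h1 : x = w₁
      · subst h1; linarith [hval1, h0]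
      by_cases h2 : x = w₂
      · subst h2; linarith [hval2, h0]
      · rw [hvalo x h1 h2, h0]
    have hcard : (Finset.univ.filter fun u => G.Adj v u ∧ zf' u ≠ 0).card < m := by
      calc (Finset.univ.filter fun u => G.Adj v u ∧ zf' u ≠ 0).card
          ≤ ((Finset.univ.filter fun u => G.Adj v u ∧ zf u ≠ 0).erase x₀).card :=
            Finset.card_le_card hsub
        _ < (Finset.univ.filter fun u => G.Adj v u ∧ zf u ≠ 0).card := by
            apply Finset.card_erase_lt_of_mem
            exact Finset.mem_filter.2 ⟨Finset.mem_univ x₀, hx₀a, hx₀n⟩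
        _ = m := hm
    have hsum' : ∀ i : Fin r, i ≠ j →
        ∑ u ∈ Finset.univ.filter (fun u => P u = i ∧ G.Adj v u), zf' u = z := by
      intro i hi
      have h1 : ∑ u ∈ Finset.univ.filter (fun u => P u = i ∧ G.Adj v u),
          (if u = w₁ then (1:ℝ) else 0) =
          ∑ u ∈ Finset.univ.filter (fun u => P u = i ∧ G.Adj v u),
          (if u = w₂ then (1:ℝ) else 0) := by
        rw [Finset.sum_ite_eq' _ w₁ (fun _ => (1:ℝ)), Finset.sum_ite_eq' _ w₂ (fun _ => (1:ℝ))]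
        have : (w₁ ∈ Finset.univ.filter (fun u => P u = i ∧ G.Adj v u)) ↔
            (w₂ ∈ Finset.univ.filter (fun u => P u = i ∧ G.Adj v u)) := by
          simp only [Finset.mem_filter, Finset.mem_univ, true_and]
          rw [hPP]
          exact and_congr_right fun _ => ⟨fun _ => ha2, fun _ => ha1⟩
        rcases this with ⟨h12, h21⟩
        by_cases hw : w₁ ∈ Finset.univ.filter (fun u => P u = i ∧ G.Adj v u)
        · rw [if_pos hw, if_pos (h12 hw)]
        · rw [if_neg hw, if_neg (fun h => hw (h21 h))]
      simp only [hzf']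
      rw [Finset.sum_sub_distrib, hsum i hi, ← Finset.mul_sum, Finset.sum_sub_distrib, h1]
      ring
    have hG' := IH _ hcard zf' z rfl hsum'
    exact good_pair hPP hPj ha1 ha2 hc0 hp hn (fun x _ => by simp only [hzf']; ring) hmono hG'
  · -- no mixed pair
    have key : ∀ (f : V → ℝ) (zz : ℝ), (∀ x, f x ≠ 0 ↔ zf x ≠ 0) → 0 < zz →
        (∀ i : Fin r, i ≠ j →
          ∑ u ∈ Finset.univ.filter (fun u => P u = i ∧ G.Adj v u), f u = zz) →
        (¬ ∃ w₁ w₂, G.Adj v w₁ ∧ G.Adj v w₂ ∧ P w₁ = P w₂ ∧ P w₁ ≠ j ∧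
          0 < f w₁ ∧ f w₂ < 0) →
        GoodDec G P j v f := by
      intro f zz hsupp hzz hs hnm
      obtain ⟨W, α, x₀, hα, hWm, hWc, hWf, hWs, hx₀a, hx₀v, hx₀W⟩ :=
        pos_step hr hpart hv f zz hzz hs hnm
      set f' := fun x => f x - α * (if x ∈ W then (1:ℝ) else 0) with hf'
      have hmono : ∀ x, (0 < f' x → 0 < f x) ∧ (f' x < 0 → f x < 0) := by
        intro x
        by_cases hx : x ∈ W
        · have := (hWm x hx).2
          simp only [hf', if_pos hx]
          constructor <;> intro <;> linarith
        · simp only [hf', if_neg hx]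
          constructor <;> intro <;> linarith
      have hsub : (Finset.univ.filter fun u => G.Adj v u ∧ f' u ≠ 0) ⊆
          (Finset.univ.filter fun u => G.Adj v u ∧ zf u ≠ 0).erase x₀ := by
        intro x hx
        obtain ⟨_, hxa, hxn⟩ := Finset.mem_filter.1 hx
        rw [Finset.mem_erase]
        constructor
        · intro h
          subst h
          apply hxn
          simp only [hf', if_pos hx₀W, hx₀v]
          ring
        · refine Finset.mem_filter.2 ⟨Finset.mem_univ x, hxa, (hsupp x).1 ?_⟩
          intro h0
          apply hxn
          by_cases hxW : x ∈ W
          · exact absurd h0 (by have := (hWm x hxW).2; linarith)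
          · simp only [hf', if_neg hxW, h0]; ring
      have hcard : (Finset.univ.filter fun u => G.Adj v u ∧ f' u ≠ 0).card < m := by
        calc (Finset.univ.filter fun u => G.Adj v u ∧ f' u ≠ 0).card
            ≤ ((Finset.univ.filter fun u => G.Adj v u ∧ zf u ≠ 0).erase x₀).card :=
              Finset.card_le_card hsub
          _ < (Finset.univ.filter fun u => G.Adj v u ∧ zf u ≠ 0).card := by
              apply Finset.card_erase_lt_of_mem
              refine Finset.mem_filter.2 ⟨Finset.mem_univ x₀, hx₀a, (hsupp x₀).1 ?_⟩
              rw [hx₀v]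
              exact ne_of_gt hα
          _ = m := hm
      have hG' := IH _ hcard f' (zz - α) rfl (fun i hi => by
        have := hWs i hi
        simpa [hf'] using this)
      refine good_trans (ne_of_gt hα) (fun x hx => (hWm x hx).1) hWc hWf ?_
        (fun x _ => by simp only [hf']; ring) hmono hG'
      intro x hx
      have h1 : 0 < f x := lt_of_lt_of_le hα (hWm x hx).2
      rw [Real.sign_of_pos h1, Real.sign_of_pos hα]
    rcases lt_trichotomy z 0 with hz | hz | hz
    · -- z < 0 : work with -zf
      refine good_neg (key (fun x => -zf x) (-z) (fun x => by simp) (by linarith) ?_ ?_)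
      · intro i hi
        rw [Finset.sum_neg_distrib, hsum i hi]
      · rintro ⟨w₁, w₂, ha1, ha2, hPP, hPj, hp, hn⟩
        have hp' : 0 < -zf w₁ := hp
        have hn' : -zf w₂ < 0 := hn
        exact hmix ⟨w₂, w₁, ha2, ha1, hPP.symm, by rw [← hPP]; exact hPj,
          by linarith, by linarith⟩
    · -- z = 0 : everything vanishes
      apply good_zero
      intro x hx
      by_contra hxn
      have hij : P x ≠ j := by
        rw [← hv]
        exact (hpart v x hx).symm
      have hsum_i := hsum (P x) hij
      rw [hz] at hsum_i
      have hxmem : x ∈ Finset.univ.filter (fun u => P u = P x ∧ G.Adj v u) :=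
        Finset.mem_filter.2 ⟨Finset.mem_univ x, rfl, hx⟩
      rcases lt_or_gt_of_ne hxn with hneg | hpos
      · -- zf x < 0, need a positive partner
        have : ∃ y ∈ Finset.univ.filter (fun u => P u = P x ∧ G.Adj v u), 0 < zf y := by
          by_contra hall
          push_neg at hall
          have h2 : ∑ u ∈ (Finset.univ.filter
              (fun u => P u = P x ∧ G.Adj v u)).erase x, zf u ≤ 0 :=
            Finset.sum_nonpos fun y hy => hall y (Finset.mem_of_mem_erase hy)
          have h3 : zf x + ∑ u ∈ (Finset.univ.filter
              (fun u => P u = P x ∧ G.Adj v u)).erase x, zf u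
              = ∑ u ∈ Finset.univ.filter (fun u => P u = P x ∧ G.Adj v u), zf u :=
            Finset.add_sum_erase _ zf hxmem
          linarith
        obtain ⟨y, hy, hy'⟩ := this
        obtain ⟨_, hyP, hya⟩ := Finset.mem_filter.1 hy
        exact hmix ⟨y, x, hya, hx, by rw [hyP], by rw [hyP]; exact hij, hy', hneg⟩
      · -- zf x > 0, need a negative partner
        have : ∃ y ∈ Finset.univ.filter (fun u => P u = P x ∧ G.Adj v u), zf y < 0 := by
          by_contra hall
          push_neg at hall
          have h1 : zf x ≤ ∑ u ∈ Finset.univ.filter (fun u => P u = P x ∧ G.Adj v u), zf u :=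
            Finset.single_le_sum (fun y hy => hall y hy) hxmem
          linarith
        obtain ⟨y, hy, hy'⟩ := this
        obtain ⟨_, hyP, hya⟩ := Finset.mem_filter.1 hy
        exact hmix ⟨x, y, hx, hya, by rw [hyP], hij, hpos, hy'⟩
    · -- z > 0
      exact key zf z (fun x => Iff.rfl) hz hsum hmix

end Aux

/-- decomposing corrections at a vertex into gadget instructions. -/
theorem stmt_5 {V : Type*} [Fintype V] [DecidableEq V] {r n : ℕ} (hr : 3 ≤ r)
    (G : SimpleGraph V) (P : V → Fin r)
    (hpart : ∀ u v, G.Adj u v → P u ≠ P v)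
    (hsize : ∀ i : Fin r, (Finset.univ.filter fun v => P v = i).card = n)
    (j : Fin r) (v : V) (hv : P v = j) (z : ℝ) (zf : V → ℝ)
    (hz : ∀ i : Fin r, i ≠ j →
      ∑ u ∈ Finset.univ.filter (fun u => P u = i ∧ G.Adj v u), zf u = z) :
    ∃ (s t : ℕ) (A : Fin s → Finset V) (a : Fin s → ℝ)
      (u₁ u₂ : Fin t → V) (b : Fin t → ℝ),
      -- each A k is a transversal subset of N(v): one vertex in each V_i, i ≠ j
      (∀ k : Fin s, (∀ x ∈ A k, G.Adj v x) ∧ (A k).card = r - 1 ∧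
        ∀ i : Fin r, i ≠ j → ((A k).filter fun x => P x = i).card = 1) ∧
      -- (i) signs match
      (∀ k : Fin s, ∀ x ∈ A k, Real.sign (zf x) = Real.sign (a k)) ∧
      -- (ii) each triple has u₁, u₂ in the same part V_i ∩ N(v) with i ≠ j, b > 0,
      --      z_{v u₁} > 0 and z_{v u₂} < 0
      (∀ l : Fin t, P (u₁ l) = P (u₂ l) ∧ P (u₁ l) ≠ j ∧
        G.Adj v (u₁ l) ∧ G.Adj v (u₂ l) ∧ 0 < b l ∧ 0 < zf (u₁ l) ∧ zf (u₂ l) < 0) ∧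
      -- (iii) the decomposition identity
      (∀ x, G.Adj v x →
        zf x = (∑ k : Fin s, a k * (if x ∈ A k then 1 else 0))
          + (∑ l : Fin t, b l * ((if x = u₁ l then 1 else 0) - (if x = u₂ l then 1 else 0)))) := by
  obtain ⟨s, t, A, a, u₁, u₂, b, h1, h2, h3, h4⟩ :=
    aux_main hr hpart hv (Finset.univ.filter fun u => G.Adj v u ∧ zf u ≠ 0).card zf z rfl hz
  exact ⟨s, t, A, a, u₁, u₂, b, h1, fun k => (h2 k).2, h3, h4⟩
end

section
/- Let G be a graph on vertex set W and let Ĝ be the r-partite graph on r disjoint copies W×{1},...,W×{r} of W in which (u,i) and (v,j) are adjacent if and only if i ≠ j and uv ∈ E(G). Then Ĝ is K_r-divisible, its minimum cross-degree equals the minimum degree of G, and Ĝ has a fractional K_r-decomposition if and only if G has a fractional K_r-decomposition. -/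
open Finset
open scoped Classical

/-- The r-partite blow-up of `G`: vertex set `W × Fin r`, with `(u,i)` adjacent to `(v,j)`
iff `i ≠ j` and `uv ∈ E(G)`. -/
def blowup {W : Type*} (G : SimpleGraph W) (r : ℕ) : SimpleGraph (W × Fin r) where
  Adj x y := x.2 ≠ y.2 ∧ G.Adj x.1 y.1
  symm := ⟨fun x y h => ⟨h.1.symm, h.2.symm⟩⟩
  loopless := ⟨fun x h => h.1 rfl⟩

/-- `H` has a fractional K_r-decomposition. -/
noncomputable def HasFracKrDecomp {U : Type*} [Fintype U] [DecidableEq U]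
    (H : SimpleGraph U) (r : ℕ) : Prop :=
  ∃ ω : Finset U → ℝ,
    (∀ K ∈ H.cliqueFinset r, 0 ≤ ω K ∧ ω K ≤ 1) ∧
    ∀ e ∈ H.edgeFinset,
      ∑ K ∈ (H.cliqueFinset r).filter (fun K => ∀ x ∈ e, x ∈ K), ω K = 1

set_option maxHeartbeats 1000000

lemma sym2_filter_pred {α : Type*} (a b : α) (T : Finset α) :
    (∀ x ∈ (s(a,b) : Sym2 α), x ∈ T) ↔ a ∈ T ∧ b ∈ T := by
  constructor
  · intro h; exact ⟨h a (Sym2.mem_mk_left a b), h b (Sym2.mem_mk_right a b)⟩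
  · rintro ⟨h1, h2⟩ x hx
    rcases Sym2.mem_iff.mp hx with rfl | rfl <;> assumption


section helpers
variable {W : Type*} [Fintype W] [DecidableEq W] {r : ℕ} {G : SimpleGraph W}

lemma clique_fst_inj {T : Finset (W × Fin r)} (hT : (blowup G r).IsClique T)
    {p q : W × Fin r} (hp : p ∈ T) (hq : q ∈ T) (h : p.1 = q.1) : p = q := by
  by_contra hne
  exact G.loopless.irrefl q.1 (h ▸ (hT hp hq hne).2)

lemma clique_snd_inj {T : Finset (W × Fin r)} (hT : (blowup G r).IsClique T)
    {p q : W × Fin r} (hp : p ∈ T) (hq : q ∈ T) (h : p.2 = q.2) : p = q := by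
  by_contra hne
  exact (hT hp hq hne).1 h

lemma proj_mem {T : Finset (W × Fin r)} (hT : T ∈ (blowup G r).cliqueFinset r) :
    T.image Prod.fst ∈ G.cliqueFinset r := by
  rw [SimpleGraph.mem_cliqueFinset_iff] at hT ⊢
  obtain ⟨hc, hcard⟩ := hT
  constructor
  · rintro a ha b hb hab
    simp only [coe_image, Set.mem_image, mem_coe] at ha hb
    obtain ⟨p, hp, rfl⟩ := ha
    obtain ⟨q, hq, rfl⟩ := hb
    exact (hc hp hq (fun h => hab (congrArg Prod.fst h))).2
  · rw [Finset.card_image_of_injOn, hcard]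
    intro p hp q hq h
    exact clique_fst_inj hc hp hq h

lemma fiber_card {K : Finset W} {u v : W} {i j : Fin r}
    (hK : K ∈ G.cliqueFinset r) (hu : u ∈ K) (hv : v ∈ K) (huv : u ≠ v) (hij : i ≠ j) :
    (((blowup G r).cliqueFinset r).filter
      (fun T => (u,i) ∈ T ∧ (v,j) ∈ T ∧ T.image Prod.fst = K)).card = (r-2).factorial := by
  rw [SimpleGraph.mem_cliqueFinset_iff] at hK
  obtain ⟨hKc, hKcard⟩ := hK
  set A : Finset W := (K.erase u).erase v with hA
  set B : Finset (Fin r) := (Finset.univ.erase i).erase j with hB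
  have hvKu : v ∈ K.erase u := Finset.mem_erase.mpr ⟨huv.symm, hv⟩
  have hAcard : A.card = r - 2 := by
    rw [hA, Finset.card_erase_of_mem hvKu, Finset.card_erase_of_mem hu, hKcard]
    omega
  have hBcard : B.card = r - 2 := by
    rw [hB, Finset.card_erase_of_mem (Finset.mem_erase.mpr ⟨hij.symm, Finset.mem_univ j⟩),
      Finset.card_erase_of_mem (Finset.mem_univ i), Finset.card_univ, Fintype.card_fin]
    omega
  have hAu : ∀ a ∈ A, a ≠ u := fun a ha => Finset.ne_of_mem_erase (Finset.mem_of_mem_erase ha)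
  have hAv : ∀ a ∈ A, a ≠ v := fun a ha => Finset.ne_of_mem_erase ha
  have hAK : ∀ a ∈ A, a ∈ K := fun a ha => Finset.mem_of_mem_erase (Finset.mem_of_mem_erase ha)
  have hBi : ∀ b ∈ B, b ≠ i := fun b hb => Finset.ne_of_mem_erase (Finset.mem_of_mem_erase hb)
  have hBj : ∀ b ∈ B, b ≠ j := fun b hb => Finset.ne_of_mem_erase hb
  have hins : insert u (insert v A) = K := by
    rw [hA, Finset.insert_erase hvKu, Finset.insert_erase hu]
  -- the map from embeddings to cliques
  set F : (↥A ↪ ↥B) → Finset (W × Fin r) :=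
    fun f => insert (u,i) (insert (v,j) (A.attach.image (fun a => (a.1, (f a).1)))) with hF
  have hmemF : ∀ (f : ↥A ↪ ↥B) (p : W × Fin r),
      p ∈ F f ↔ p = (u,i) ∨ p = (v,j) ∨ ∃ a : ↥A, p = (a.1, (f a).1) := by
    intro f p
    simp only [hF, Finset.mem_insert, Finset.mem_image, Finset.mem_attach, true_and, and_true]
    constructor
    · rintro (h | h | ⟨a, rfl⟩)
      exacts [Or.inl h, Or.inr (Or.inl h), Or.inr (Or.inr ⟨a, rfl⟩)]
    · rintro (h | h | ⟨a, rfl⟩)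
      exacts [Or.inl h, Or.inr (Or.inl h), Or.inr (Or.inr ⟨a, rfl⟩)]
  have hfst : ∀ (f : ↥A ↪ ↥B) (p : W × Fin r), p ∈ F f → p.1 ∈ K := by
    intro f p hp
    rcases (hmemF f p).mp hp with h | h | ⟨a, rfl⟩
    · rw [h]; exact hu
    · rw [h]; exact hv
    · exact hAK _ a.2
  have hFdistinct : ∀ (f : ↥A ↪ ↥B) (p q : W × Fin r), p ∈ F f → q ∈ F f → p ≠ q →
      p.1 ≠ q.1 ∧ p.2 ≠ q.2 := by
    intro f p q hp hq hne
    rcases (hmemF f p).mp hp with h | h | ⟨a, rfl⟩ <;>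
      rcases (hmemF f q).mp hq with h' | h' | ⟨a', h'⟩ <;> subst_vars
    · exact absurd rfl hne
    · exact ⟨huv, hij⟩
    · exact ⟨(hAu _ a'.2).symm, (hBi _ (f a').2).symm⟩
    · exact ⟨huv.symm, hij.symm⟩
    · exact absurd rfl hne
    · exact ⟨(hAv _ a'.2).symm, (hBj _ (f a').2).symm⟩
    · exact ⟨hAu _ a.2, hBi _ (f a).2⟩
    · exact ⟨hAv _ a.2, hBj _ (f a).2⟩
    · have haa : a ≠ a' := fun h => hne (by rw [h])
      refine ⟨fun h => haa (Subtype.ext h), fun h => haa (f.injective (Subtype.ext h))⟩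
  have hmapsto : ∀ f : ↥A ↪ ↥B, F f ∈ (((blowup G r).cliqueFinset r).filter
      (fun T => (u,i) ∈ T ∧ (v,j) ∈ T ∧ T.image Prod.fst = K)) := by
    intro f
    have hclique : (blowup G r).IsClique (F f) := by
      intro p hp q hq hne
      obtain ⟨h1, h2⟩ := hFdistinct f p q hp hq hne
      exact ⟨h2, hKc (hfst f p hp) (hfst f q hq) h1⟩
    have himg : (F f).image Prod.fst = K := by
      apply subset_antisymm
      · intro x hx
        obtain ⟨p, hp, rfl⟩ := Finset.mem_image.mp hx
        exact hfst f p hp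
      · rw [← hins]
        intro x hx
        rcases Finset.mem_insert.mp hx with rfl | hx
        · exact Finset.mem_image.mpr ⟨(x,i), (hmemF f _).mpr (Or.inl rfl), rfl⟩
        rcases Finset.mem_insert.mp hx with rfl | hx
        · exact Finset.mem_image.mpr ⟨(x,j), (hmemF f _).mpr (Or.inr (Or.inl rfl)), rfl⟩
        · exact Finset.mem_image.mpr ⟨((⟨x, hx⟩ : ↥A).1, (f ⟨x, hx⟩).1),
            (hmemF f _).mpr (Or.inr (Or.inr ⟨⟨x, hx⟩, rfl⟩)), rfl⟩
    have hcard : (F f).card = r := by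
      have hinj : Set.InjOn Prod.fst (F f : Set (W × Fin r)) := by
        intro p hp q hq h
        by_contra hne
        exact (hFdistinct f p q hp hq hne).1 h
      have := Finset.card_image_of_injOn hinj
      rw [himg, hKcard] at this
      omega
    refine Finset.mem_filter.mpr ⟨SimpleGraph.mem_cliqueFinset_iff.mpr ⟨hclique, hcard⟩,
      (hmemF f _).mpr (Or.inl rfl), (hmemF f _).mpr (Or.inr (Or.inl rfl)), himg⟩
  have := Finset.card_bij (fun (f : ↥A ↪ ↥B) (_ : f ∈ (Finset.univ : Finset (↥A ↪ ↥B))) => F f)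
    (fun f _ => hmapsto f)
    (by -- injectivity
      intro f _ g _ hfg
      have hfg' : F f = F g := hfg
      ext a
      have ha : ((a : ↥A).1, (f a).1) ∈ F g := by
        rw [← hfg']; exact (hmemF f _).mpr (Or.inr (Or.inr ⟨a, rfl⟩))
      rcases (hmemF g _).mp ha with h | h | ⟨a', h⟩
      · exact absurd (congrArg Prod.fst h) (hAu _ a.2)
      · exact absurd (congrArg Prod.fst h) (hAv _ a.2)
      · have h1 : a = a' := Subtype.ext (congrArg Prod.fst h)
        have h2 : (f a : Fin r) = (g a' : Fin r) := congrArg Prod.snd h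
        rw [h1]
        rw [h1] at h2
        exact congrArg Fin.val h2)
    (by -- surjectivity
      intro T hT
      obtain ⟨hTclique, hTu, hTv, hTimg⟩ := Finset.mem_filter.mp hT
      rw [SimpleGraph.mem_cliqueFinset_iff] at hTclique
      obtain ⟨hTc, hTcard⟩ := hTclique
      have hex : ∀ a ∈ A, ∃ k, (a, k) ∈ T := by
        intro a ha
        have : a ∈ T.image Prod.fst := hTimg ▸ hAK a ha
        obtain ⟨p, hp, hp1⟩ := Finset.mem_image.mp this
        exact ⟨p.2, by rwa [← hp1, Prod.mk.eta]⟩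
      choose k hk using hex
      have hkB : ∀ (a : W) (ha : a ∈ A), k a ha ∈ B := by
        intro a ha
        refine Finset.mem_erase.mpr ⟨?_, Finset.mem_erase.mpr ⟨?_, Finset.mem_univ _⟩⟩
        · intro h
          have := clique_snd_inj hTc (hk a ha) hTv (by simpa using h)
          exact hAv a ha (congrArg Prod.fst this)
        · intro h
          have := clique_snd_inj hTc (hk a ha) hTu (by simpa using h)
          exact hAu a ha (congrArg Prod.fst this)
      set f : ↥A ↪ ↥B := ⟨fun a => ⟨k a.1 a.2, hkB a.1 a.2⟩, by
        intro a b hab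
        have : ((a:W), k a.1 a.2) = ((b:W), k b.1 b.2) :=
          clique_snd_inj hTc (hk a.1 a.2) (hk b.1 b.2) (by simpa using congrArg Subtype.val hab)
        exact Subtype.ext (congrArg Prod.fst this)⟩ with hf
      refine ⟨f, Finset.mem_univ _, ?_⟩
      have hsub : F f ⊆ T := by
        intro p hp
        rcases (hmemF f p).mp hp with h | h | ⟨a, rfl⟩
        · rw [h]; exact hTu
        · rw [h]; exact hTv
        · exact hk a.1 a.2
      have hcardF : (F f).card = r := by
        have := Finset.mem_filter.mp (hmapsto f)
        exact (SimpleGraph.mem_cliqueFinset_iff.mp this.1).2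
      exact Finset.eq_of_subset_of_card_le hsub (by rw [hcardF, hTcard]))
  rw [← this, Finset.card_univ, Fintype.card_embedding_eq, Fintype.card_coe, Fintype.card_coe,
    hAcard, hBcard, Nat.descFactorial_self]

lemma pair_unique {T : Finset (W × Fin r)} (hT : (blowup G r).IsClique T)
    {u v : W} (huv : u ≠ v) (hu : u ∈ T.image Prod.fst) (hv : v ∈ T.image Prod.fst) :
    ((Finset.univ : Finset (Fin r)).offDiag.filter
      (fun p => (u, p.1) ∈ T ∧ (v, p.2) ∈ T)).card = 1 := by
  obtain ⟨pu, hpu, hpu1⟩ := Finset.mem_image.mp hu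
  obtain ⟨pv, hpv, hpv1⟩ := Finset.mem_image.mp hv
  have hpu' : (u, pu.2) ∈ T := by rwa [← hpu1, Prod.mk.eta]
  have hpv' : (v, pv.2) ∈ T := by rwa [← hpv1, Prod.mk.eta]
  have hne : pu.2 ≠ pv.2 := by
    intro h
    exact huv (congrArg Prod.fst (clique_snd_inj hT hpu' hpv' h))
  rw [Finset.card_eq_one]
  refine ⟨(pu.2, pv.2), ?_⟩
  ext p
  simp only [Finset.mem_filter, Finset.mem_offDiag, Finset.mem_univ, true_and,
    Finset.mem_singleton]
  constructor
  · rintro ⟨-, h1, h2⟩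
    have e1 : (u, p.1) = (u, pu.2) := clique_fst_inj hT h1 hpu' rfl
    have e2 : (v, p.2) = (v, pv.2) := clique_fst_inj hT h2 hpv' rfl
    have h1 : p.1 = pu.2 := congrArg Prod.snd e1
    have h2 : p.2 = pv.2 := congrArg Prod.snd e2
    rw [← h1, ← h2]
  · rintro rfl
    exact ⟨hne, hpu', hpv'⟩

lemma cross_deg (i : Fin r) (x : W × Fin r) (hxi : x.2 ≠ i) :
    (Finset.univ.filter fun y : W × Fin r => y.2 = i ∧ (blowup G r).Adj x y).card
      = G.degree x.1 := by
  have : (Finset.univ.filter fun y : W × Fin r => y.2 = i ∧ (blowup G r).Adj x y)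
      = (G.neighborFinset x.1).map ⟨fun w => (w, i), fun a b h => congrArg Prod.fst h⟩ := by
    ext y
    simp only [Finset.mem_filter, Finset.mem_univ, true_and, Finset.mem_map,
      Function.Embedding.coeFn_mk, SimpleGraph.mem_neighborFinset]
    constructor
    · rintro ⟨h1, h2, h3⟩
      exact ⟨y.1, h3, by rw [← h1]; rfl⟩
    · rintro ⟨w, hw, rfl⟩
      exact ⟨rfl, hxi, hw⟩
  rw [this, Finset.card_map]
  rfl


lemma decomp_of (hr : 2 ≤ r) (h : HasFracKrDecomp G r) : HasFracKrDecomp (blowup G r) r := by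
  obtain ⟨ω, hb, he⟩ := h
  have hfpos : (0:ℝ) < (r-2).factorial := by exact_mod_cast (r-2).factorial_pos
  refine ⟨fun T => ω (T.image Prod.fst) / (r-2).factorial, ?_, ?_⟩
  · intro T hT
    have hK := proj_mem hT
    constructor
    · exact div_nonneg (hb _ hK).1 hfpos.le
    · rw [div_le_one hfpos]
      calc ω (T.image Prod.fst) ≤ 1 := (hb _ hK).2
        _ ≤ (r-2).factorial := by exact_mod_cast (r-2).factorial_pos
  · intro e heE
    induction e using Sym2.ind with
    | _ a b =>
    rw [SimpleGraph.mem_edgeFinset, SimpleGraph.mem_edgeSet] at heE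
    obtain ⟨hab2, hab1⟩ := heE
    have hab1' : a.1 ≠ b.1 := G.ne_of_adj hab1
    rw [Finset.filter_congr (fun T _ => sym2_filter_pred a b T), ← Finset.sum_div,
      div_eq_one_iff_eq hfpos.ne']
    have hmaps : ∀ T ∈ ((blowup G r).cliqueFinset r).filter (fun T => a ∈ T ∧ b ∈ T),
        T.image Prod.fst ∈ (G.cliqueFinset r).filter (fun K => a.1 ∈ K ∧ b.1 ∈ K) := by
      intro T hT
      obtain ⟨hTc, hTa, hTb⟩ := Finset.mem_filter.mp hT
      exact Finset.mem_filter.mpr ⟨proj_mem hTc, Finset.mem_image_of_mem _ hTa,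
        Finset.mem_image_of_mem _ hTb⟩
    rw [← Finset.sum_fiberwise_of_maps_to hmaps (fun T => ω (T.image Prod.fst))]
    have hinner : ∀ K ∈ (G.cliqueFinset r).filter (fun K => a.1 ∈ K ∧ b.1 ∈ K),
        (∑ T ∈ (((blowup G r).cliqueFinset r).filter (fun T => a ∈ T ∧ b ∈ T)).filter
          (fun T => T.image Prod.fst = K), ω (T.image Prod.fst))
          = ((r-2).factorial : ℝ) * ω K := by
      intro K hK
      obtain ⟨hKc, hKa, hKb⟩ := Finset.mem_filter.mp hK
      have hff : (((blowup G r).cliqueFinset r).filter (fun T => a ∈ T ∧ b ∈ T)).filter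
          (fun T => T.image Prod.fst = K)
          = ((blowup G r).cliqueFinset r).filter
            (fun T => (a.1, a.2) ∈ T ∧ (b.1, b.2) ∈ T ∧ T.image Prod.fst = K) := by
        rw [Finset.filter_filter]
        exact Finset.filter_congr (fun T _ => by rw [Prod.mk.eta, Prod.mk.eta, and_assoc])
      rw [hff, Finset.sum_congr rfl (fun T hT => by rw [(Finset.mem_filter.mp hT).2.2.2]),
        Finset.sum_const, fiber_card hKc hKa hKb hab1' hab2, nsmul_eq_mul]
    rw [Finset.sum_congr rfl hinner, ← Finset.mul_sum]
    have hE : (s(a.1, b.1) : Sym2 W) ∈ G.edgeFinset := by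
      rw [SimpleGraph.mem_edgeFinset, SimpleGraph.mem_edgeSet]; exact hab1
    have h1 := he _ hE
    rw [Finset.filter_congr (fun K _ => sym2_filter_pred a.1 b.1 K)] at h1
    rw [h1, mul_one]

lemma decomp_to (hr : 2 ≤ r) (h : HasFracKrDecomp (blowup G r) r) : HasFracKrDecomp G r := by
  obtain ⟨wh, hb, he⟩ := h
  set P := (Finset.univ : Finset (Fin r)).offDiag with hP
  have hPpos : (0:ℝ) < P.card := by
    have h1 : r < r * r := by nlinarith
    rw [hP, Finset.offDiag_card]
    simp only [Finset.card_univ, Fintype.card_fin]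
    exact_mod_cast Nat.sub_pos_of_lt h1
  set ω := fun K : Finset W => (∑ T ∈ ((blowup G r).cliqueFinset r).filter
      (fun T => T.image Prod.fst = K), wh T) / P.card with hω
  have h0 : ∀ K, 0 ≤ ω K := fun K => div_nonneg
    (Finset.sum_nonneg fun T hT => (hb T (Finset.mem_filter.mp hT).1).1) hPpos.le
  have hsum : ∀ u v : W, G.Adj u v →
      ∑ K ∈ (G.cliqueFinset r).filter (fun K => u ∈ K ∧ v ∈ K), ω K = 1 := by
    intro u v huv
    have huv' : u ≠ v := G.ne_of_adj huv
    set U := ((blowup G r).cliqueFinset r).filter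
        (fun T => u ∈ T.image Prod.fst ∧ v ∈ T.image Prod.fst) with hU
    -- step 1
    have step1 : ∑ K ∈ (G.cliqueFinset r).filter (fun K => u ∈ K ∧ v ∈ K), ω K
        = (∑ T ∈ U, wh T) / P.card := by
      rw [hω, ← Finset.sum_div]
      congr 1
      have hmaps : ∀ T ∈ U, T.image Prod.fst ∈
          (G.cliqueFinset r).filter (fun K => u ∈ K ∧ v ∈ K) := by
        intro T hT
        obtain ⟨hTc, hTu, hTv⟩ := Finset.mem_filter.mp hT
        exact Finset.mem_filter.mpr ⟨proj_mem hTc, hTu, hTv⟩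
      rw [← Finset.sum_fiberwise_of_maps_to hmaps wh]
      refine Finset.sum_congr rfl (fun K hK => ?_)
      obtain ⟨hKc, hKu, hKv⟩ := Finset.mem_filter.mp hK
      congr 1
      have hfilt : ((blowup G r).cliqueFinset r).filter
          (fun T => (u ∈ T.image Prod.fst ∧ v ∈ T.image Prod.fst) ∧ T.image Prod.fst = K)
          = ((blowup G r).cliqueFinset r).filter (fun T => T.image Prod.fst = K) := by
        refine Finset.filter_congr (fun T _ => ?_)
        constructor
        · rintro ⟨-, hpk⟩; exact hpk
        · intro hpk
          refine ⟨⟨?_, ?_⟩, hpk⟩ <;> rw [hpk] <;> assumption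
      rw [hU, Finset.filter_filter, hfilt]
    -- step 2
    have key : ∀ p ∈ P, (∑ T ∈ ((blowup G r).cliqueFinset r).filter
        (fun T => (u,p.1) ∈ T ∧ (v,p.2) ∈ T), wh T) = 1 := by
      intro p hp
      obtain ⟨-, -, hp12⟩ := Finset.mem_offDiag.mp hp
      have hE : (s((u,p.1),(v,p.2)) : Sym2 (W × Fin r)) ∈ (blowup G r).edgeFinset := by
        rw [SimpleGraph.mem_edgeFinset, SimpleGraph.mem_edgeSet]
        exact ⟨hp12, huv⟩
      have h1 := he _ hE
      rwa [Finset.filter_congr (fun T _ => sym2_filter_pred _ _ T)] at h1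
    have step2 : ∑ T ∈ U, wh T = P.card := by
      have swap : ∑ p ∈ P, (∑ T ∈ ((blowup G r).cliqueFinset r).filter
          (fun T => (u,p.1) ∈ T ∧ (v,p.2) ∈ T), wh T)
          = ∑ T ∈ (blowup G r).cliqueFinset r,
            ((P.filter (fun p => (u,p.1) ∈ T ∧ (v,p.2) ∈ T)).card : ℝ) * wh T := by
        simp_rw [Finset.sum_filter]
        rw [Finset.sum_comm]
        refine Finset.sum_congr rfl (fun T _ => ?_)
        rw [← Finset.sum_filter, Finset.sum_const, nsmul_eq_mul]
      have hcards : ∀ T ∈ (blowup G r).cliqueFinset r,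
          ((P.filter (fun p => (u,p.1) ∈ T ∧ (v,p.2) ∈ T)).card : ℝ) * wh T
          = if u ∈ T.image Prod.fst ∧ v ∈ T.image Prod.fst then wh T else 0 := by
        intro T hT
        by_cases hm : u ∈ T.image Prod.fst ∧ v ∈ T.image Prod.fst
        · rw [if_pos hm,
            pair_unique (SimpleGraph.mem_cliqueFinset_iff.mp hT).1 huv' hm.1 hm.2]
          simp
        · rw [if_neg hm]
          have hemp : P.filter (fun p => (u,p.1) ∈ T ∧ (v,p.2) ∈ T) = ∅ := by
            rw [Finset.filter_eq_empty_iff]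
            rintro p - ⟨h1, h2⟩
            exact hm ⟨Finset.mem_image_of_mem _ h1, Finset.mem_image_of_mem _ h2⟩
          rw [hemp]; simp
      calc ∑ T ∈ U, wh T
          = ∑ T ∈ (blowup G r).cliqueFinset r,
            (if u ∈ T.image Prod.fst ∧ v ∈ T.image Prod.fst then wh T else 0) := by
            rw [hU, Finset.sum_filter]
        _ = ∑ T ∈ (blowup G r).cliqueFinset r,
            ((P.filter (fun p => (u,p.1) ∈ T ∧ (v,p.2) ∈ T)).card : ℝ) * wh T :=
            (Finset.sum_congr rfl hcards).symm
        _ = ∑ p ∈ P, (∑ T ∈ ((blowup G r).cliqueFinset r).filter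
            (fun T => (u,p.1) ∈ T ∧ (v,p.2) ∈ T), wh T) := swap.symm
        _ = ∑ p ∈ P, (1:ℝ) := Finset.sum_congr rfl key
        _ = P.card := by rw [Finset.sum_const, nsmul_eq_mul, mul_one]
    rw [step1, step2, div_self hPpos.ne']
  refine ⟨ω, ?_, ?_⟩
  · intro K hK
    refine ⟨h0 K, ?_⟩
    have hcard : 1 < K.card := by
      rw [(SimpleGraph.mem_cliqueFinset_iff.mp hK).2]; omega
    obtain ⟨x, hx, y, hy, hxy⟩ := Finset.one_lt_card.mp hcard
    have hadj : G.Adj x y := (SimpleGraph.mem_cliqueFinset_iff.mp hK).1 hx hy hxy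
    calc ω K ≤ ∑ K' ∈ (G.cliqueFinset r).filter (fun K' => x ∈ K' ∧ y ∈ K'), ω K' :=
          Finset.single_le_sum (fun K' _ => h0 K') (Finset.mem_filter.mpr ⟨hK, hx, hy⟩)
      _ = 1 := hsum x y hadj
  · intro e heE
    induction e using Sym2.ind with
    | _ a b =>
    rw [SimpleGraph.mem_edgeFinset, SimpleGraph.mem_edgeSet] at heE
    rw [Finset.filter_congr (fun K _ => sym2_filter_pred a b K)]
    exact hsum a b heE

end helpers

/-- the blow-up Ĝ is K_r-divisible, its minimum cross-degree is the minimum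
degree of G, and Ĝ has a fractional K_r-decomposition iff G does. -/
theorem stmt_9 {W : Type*} [Fintype W] [DecidableEq W] [Nonempty W] {r : ℕ} (hr : 2 ≤ r)
    (G : SimpleGraph W) :
    (∀ (i j : Fin r) (x : W × Fin r), x.2 ≠ i → x.2 ≠ j →
      (Finset.univ.filter fun y : W × Fin r => y.2 = i ∧ (blowup G r).Adj x y).card =
        (Finset.univ.filter fun y : W × Fin r => y.2 = j ∧ (blowup G r).Adj x y).card) ∧
    (sInf {d : ℕ | ∃ (j : Fin r) (x : W × Fin r), x.2 ≠ j ∧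
        d = (Finset.univ.filter fun y : W × Fin r => y.2 = j ∧ (blowup G r).Adj x y).card}
      = G.minDegree) ∧
    (HasFracKrDecomp (blowup G r) r ↔ HasFracKrDecomp G r) := by
  refine ⟨?_, ?_, ?_⟩
  · intro i j x hxi hxj
    rw [cross_deg i x hxi, cross_deg j x hxj]
  · have hset : {d : ℕ | ∃ (j : Fin r) (x : W × Fin r), x.2 ≠ j ∧
        d = (Finset.univ.filter fun y : W × Fin r => y.2 = j ∧ (blowup G r).Adj x y).card}
        = {d : ℕ | ∃ w : W, d = G.degree w} := by
      ext d
      constructor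
      · rintro ⟨j, x, hxj, rfl⟩
        exact ⟨x.1, cross_deg j x hxj⟩
      · rintro ⟨w, rfl⟩
        have h01 : ((⟨0, by omega⟩ : Fin r)) ≠ (⟨1, by omega⟩ : Fin r) := by
          intro h
          simpa using congrArg Fin.val h
        have hc := cross_deg (G := G) (⟨1, by omega⟩ : Fin r) (w, (⟨0, by omega⟩ : Fin r)) h01
        exact ⟨⟨1, by omega⟩, (w, ⟨0, by omega⟩), h01, hc.symm⟩
    rw [hset]
    apply le_antisymm
    · obtain ⟨v, hv⟩ := G.exists_minimal_degree_vertex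
      exact Nat.sInf_le ⟨v, hv⟩
    · refine le_csInf ⟨G.degree (Classical.arbitrary W), Classical.arbitrary W, rfl⟩ ?_
      rintro d ⟨w, rfl⟩
      exact G.minDegree_le_degree w
  · exact ⟨decomp_to hr, decomp_of hr⟩
end
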